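/- arXiv:2602.17945 — 6 statements merged into one kernel-verified Lean document; each statement's English description precedes it below -/
import Mathlib

section
/- A biderivation on the rational function field in n variables satisfies the Jacobi identity for all triples of elements as soon as it satisfies the Jacobi identity on all triples of coordinate functions (x_i, x_j, x_k) with 1 ≤ i < j < k ≤ n. -/
noncomputable def pd {n : ℕ} (i : Fin n) (f : (Fin n → ℝ) → ℝ) (x : Fin n → ℝ) : ℝ :=
  fderiv ℝ f x (Pi.single i 1)

noncomputable def pb {n : ℕ} (P : Fin n → Fin n → (Fin n → ℝ) → ℝ)
    (f g : (Fin n → ℝ) → ℝ) (x : Fin n → ℝ) : ℝ :=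
  ∑ i : Fin n, ∑ j : Fin n, P i j x * pd i f x * pd j g x

section helpers
variable {n : ℕ}

lemma contDiff_pd {f : (Fin n → ℝ) → ℝ} (hf : ContDiff ℝ (⊤ : ℕ∞) f) (i : Fin n) :
    ContDiff ℝ (⊤ : ℕ∞) (pd i f) := by
  have h1 : ContDiff ℝ (⊤ : ℕ∞) (fderiv ℝ f) := hf.fderiv_right (mod_cast le_top)
  exact h1.clm_apply contDiff_const

lemma pd_sum {ι : Type*} (s : Finset ι) (F : ι → (Fin n → ℝ) → ℝ) (i : Fin n)
    (x : Fin n → ℝ) (hF : ∀ a ∈ s, DifferentiableAt ℝ (F a) x) :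
    pd i (fun y => ∑ a ∈ s, F a y) x = ∑ a ∈ s, pd i (F a) x := by
  simp only [pd, fderiv_fun_sum hF]
  simp

lemma pd_mul {f g : (Fin n → ℝ) → ℝ} {x : Fin n → ℝ} (hf : DifferentiableAt ℝ f x)
    (hg : DifferentiableAt ℝ g x) (i : Fin n) :
    pd i (fun y => f y * g y) x = pd i f x * g x + f x * pd i g x := by
  simp only [pd, fderiv_fun_mul hf hg]
  simp only [ContinuousLinearMap.add_apply, ContinuousLinearMap.smul_apply, smul_eq_mul]
  ring

lemma pd_neg (f : (Fin n → ℝ) → ℝ) (i : Fin n) (x : Fin n → ℝ) :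
    pd i (fun y => -(f y)) x = -(pd i f x) := by
  simp only [pd, fderiv_neg]
  simp

lemma pd_coord (i j : Fin n) (x : Fin n → ℝ) :
    pd i (fun y => y j) x = if i = j then 1 else 0 := by
  have : (fun y : Fin n → ℝ => y j) = ⇑(ContinuousLinearMap.proj (R := ℝ) (φ := fun _ : Fin n => ℝ) j) := rfl
  rw [pd, this, ContinuousLinearMap.fderiv]
  simp [Pi.single_apply, eq_comm]

lemma pd_symm {f : (Fin n → ℝ) → ℝ} (hf : ContDiff ℝ (⊤ : ℕ∞) f) (i j : Fin n) (x : Fin n → ℝ) :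
    pd i (pd j f) x = pd j (pd i f) x := by
  have hfd : ContDiff ℝ (⊤ : ℕ∞) (fderiv ℝ f) := hf.fderiv_right (mod_cast le_top)
  have h1 : ∀ (v w : Fin n → ℝ),
      fderiv ℝ (fun y => fderiv ℝ f y v) x w = fderiv ℝ (fderiv ℝ f) x w v := by
    intro v w
    rw [fderiv_clm_apply (hfd.differentiable (by simp) x) (differentiableAt_const v)]
    simp
  have hsymm := second_derivative_symmetric (f := f) (f' := fderiv ℝ f)
    (f'' := fderiv ℝ (fderiv ℝ f) x) (x := x)
    (fun y => (hf.differentiable (by simp) y).hasFDerivAt)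
    ((hfd.differentiable (by simp) x).hasFDerivAt)
  have e1 : pd j f = fun y => fderiv ℝ f y (Pi.single j 1) := rfl
  have e2 : pd i f = fun y => fderiv ℝ f y (Pi.single i 1) := rfl
  rw [pd, pd, e1, e2, h1, h1, hsymm]

lemma pd_mul3 {u v w : (Fin n → ℝ) → ℝ} {x : Fin n → ℝ} (hu : DifferentiableAt ℝ u x)
    (hv : DifferentiableAt ℝ v x) (hw : DifferentiableAt ℝ w x) (b : Fin n) :
    pd b (fun y => u y * v y * w y) x
      = pd b u x * v x * w x + u x * pd b v x * w x + u x * v x * pd b w x := by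
  rw [pd_mul (f := fun y => u y * v y) (hu.mul hv) hw b, pd_mul hu hv b]
  ring

end helpers

section alg
variable {n : ℕ}

abbrev TT (n : ℕ) := Fin n × Fin n × Fin n × Fin n

lemma sum4 (f : Fin n → Fin n → Fin n → Fin n → ℝ) :
    ∑ a : Fin n, ∑ b : Fin n, ∑ i : Fin n, ∑ j : Fin n, f a b i j
      = ∑ t : TT n, f t.1 t.2.1 t.2.2.1 t.2.2.2 := by
  rw [Fintype.sum_prod_type]
  refine Finset.sum_congr rfl fun a _ => ?_
  rw [Fintype.sum_prod_type]
  refine Finset.sum_congr rfl fun b _ => ?_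
  rw [Fintype.sum_prod_type]

def ee1 : TT n ≃ TT n where
  toFun t := (t.2.2.1, t.2.2.2, t.2.1, t.1)
  invFun t := (t.2.2.2, t.2.2.1, t.1, t.2.1)
  left_inv := fun ⟨_,_,_,_⟩ => rfl
  right_inv := fun ⟨_,_,_,_⟩ => rfl

def ee2 : TT n ≃ TT n where
  toFun t := (t.2.2.2, t.2.1, t.1, t.2.2.1)
  invFun t := (t.2.2.1, t.2.1, t.2.2.2, t.1)
  left_inv := fun ⟨_,_,_,_⟩ => rfl
  right_inv := fun ⟨_,_,_,_⟩ => rfl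

def ee3 : TT n ≃ TT n where
  toFun t := (t.2.2.1, t.2.1, t.2.2.2, t.1)
  invFun t := (t.2.2.2, t.2.1, t.1, t.2.2.1)
  left_inv := fun ⟨_,_,_,_⟩ => rfl
  right_inv := fun ⟨_,_,_,_⟩ => rfl

lemma cancel (p : Fin n → Fin n → ℝ) (A C : Fin n → ℝ) (B2 : Fin n → Fin n → ℝ)
    (hp : ∀ i j, p i j = -p j i) (hB2 : ∀ i j, B2 i j = B2 j i) :
    (∑ a : Fin n, ∑ b : Fin n, ∑ i : Fin n, ∑ j : Fin n,
      p a b * A a * (p i j * B2 b i * C j))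
    + (∑ a : Fin n, ∑ b : Fin n, ∑ i : Fin n, ∑ j : Fin n,
      p a b * C a * (p i j * A i * B2 b j)) = 0 := by
  rw [sum4, sum4]
  have h : (∑ t : TT n, p t.1 t.2.1 * C t.1 * (p t.2.2.1 t.2.2.2 * A t.2.2.1 * B2 t.2.1 t.2.2.2))
      = ∑ t : TT n, -(p t.1 t.2.1 * A t.1 * (p t.2.2.1 t.2.2.2 * B2 t.2.1 t.2.2.1 * C t.2.2.2)) := by
    refine Fintype.sum_equiv ee1 _ _ fun ⟨a,b,i,j⟩ => ?_
    simp only [ee1, Equiv.coe_fn_mk]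
    rw [hp b a, hB2 j b]
    ring
  rw [h, Finset.sum_neg_distrib]
  ring

lemma firstorder (p : Fin n → Fin n → ℝ) (q : Fin n → Fin n → Fin n → ℝ)
    (F G H : Fin n → ℝ)
    (hJ : ∀ i j k : Fin n, ∑ b : Fin n,
      (p i b * q b j k + p j b * q b k i + p k b * q b i j) = 0) :
    (∑ a : Fin n, ∑ b : Fin n, ∑ i : Fin n, ∑ j : Fin n,
      p a b * F a * (q b i j * G i * H j))
    + (∑ a : Fin n, ∑ b : Fin n, ∑ i : Fin n, ∑ j : Fin n,
      p a b * G a * (q b i j * H i * F j))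
    + (∑ a : Fin n, ∑ b : Fin n, ∑ i : Fin n, ∑ j : Fin n,
      p a b * H a * (q b i j * F i * G j)) = 0 := by
  rw [sum4, sum4, sum4]
  have h2 : (∑ t : TT n, p t.1 t.2.1 * G t.1 * (q t.2.1 t.2.2.1 t.2.2.2 * H t.2.2.1 * F t.2.2.2))
      = ∑ t : TT n, p t.2.2.1 t.2.1 * q t.2.1 t.2.2.2 t.1 * F t.1 * G t.2.2.1 * H t.2.2.2 := by
    refine Fintype.sum_equiv ee2 _ _ fun ⟨a,b,i,j⟩ => ?_
    simp only [ee2, Equiv.coe_fn_mk]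
    ring
  have h3 : (∑ t : TT n, p t.1 t.2.1 * H t.1 * (q t.2.1 t.2.2.1 t.2.2.2 * F t.2.2.1 * G t.2.2.2))
      = ∑ t : TT n, p t.2.2.2 t.2.1 * q t.2.1 t.1 t.2.2.1 * F t.1 * G t.2.2.1 * H t.2.2.2 := by
    refine Fintype.sum_equiv ee3 _ _ fun ⟨a,b,i,j⟩ => ?_
    simp only [ee3, Equiv.coe_fn_mk]
    ring
  rw [h2, h3, ← Finset.sum_add_distrib, ← Finset.sum_add_distrib, ← sum4
    (f := fun a b i j => p a b * F a * (q b i j * G i * H j)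
      + p i b * q b j a * F a * G i * H j + p j b * q b a i * F a * G i * H j)]
  have key : ∀ a i j : Fin n, ∑ b : Fin n,
      (p a b * F a * (q b i j * G i * H j)
        + p i b * q b j a * F a * G i * H j + p j b * q b a i * F a * G i * H j) = 0 := by
    intro a i j
    have h0 := hJ a i j
    calc ∑ b : Fin n, (p a b * F a * (q b i j * G i * H j)
        + p i b * q b j a * F a * G i * H j + p j b * q b a i * F a * G i * H j)
        = (∑ b : Fin n, (p a b * q b i j + p i b * q b j a + p j b * q b a i))
            * (F a * G i * H j) := by
          rw [Finset.sum_mul]; exact Finset.sum_congr rfl fun b _ => by ring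
      _ = 0 := by rw [h0, zero_mul]
  calc ∑ a : Fin n, ∑ b : Fin n, ∑ i : Fin n, ∑ j : Fin n,
      (p a b * F a * (q b i j * G i * H j)
        + p i b * q b j a * F a * G i * H j + p j b * q b a i * F a * G i * H j)
      = ∑ a : Fin n, ∑ i : Fin n, ∑ j : Fin n, ∑ b : Fin n,
        (p a b * F a * (q b i j * G i * H j)
        + p i b * q b j a * F a * G i * H j + p j b * q b a i * F a * G i * H j) := by
        refine Finset.sum_congr rfl fun a _ => ?_
        rw [Finset.sum_comm]
        refine Finset.sum_congr rfl fun i _ => Finset.sum_comm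
    _ = 0 := by simp [key]

lemma key_alg (p : Fin n → Fin n → ℝ) (q : Fin n → Fin n → Fin n → ℝ)
    (F G H : Fin n → ℝ) (F2 G2 H2 : Fin n → Fin n → ℝ)
    (hp : ∀ i j, p i j = -p j i)
    (hF2 : ∀ i j, F2 i j = F2 j i) (hG2 : ∀ i j, G2 i j = G2 j i)
    (hH2 : ∀ i j, H2 i j = H2 j i)
    (hJ : ∀ i j k : Fin n, ∑ b : Fin n,
      (p i b * q b j k + p j b * q b k i + p k b * q b i j) = 0) :
    (∑ a : Fin n, ∑ b : Fin n, ∑ i : Fin n, ∑ j : Fin n, p a b * F a *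
      (q b i j * G i * H j + p i j * G2 b i * H j + p i j * G i * H2 b j))
    + (∑ a : Fin n, ∑ b : Fin n, ∑ i : Fin n, ∑ j : Fin n, p a b * G a *
      (q b i j * H i * F j + p i j * H2 b i * F j + p i j * H i * F2 b j))
    + (∑ a : Fin n, ∑ b : Fin n, ∑ i : Fin n, ∑ j : Fin n, p a b * H a *
      (q b i j * F i * G j + p i j * F2 b i * G j + p i j * F i * G2 b j)) = 0 := by
  have split : ∀ (W U V : Fin n → ℝ) (U2 V2 : Fin n → Fin n → ℝ),
      (∑ a : Fin n, ∑ b : Fin n, ∑ i : Fin n, ∑ j : Fin n, p a b * W a *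
        (q b i j * U i * V j + p i j * U2 b i * V j + p i j * U i * V2 b j))
      = (∑ a : Fin n, ∑ b : Fin n, ∑ i : Fin n, ∑ j : Fin n,
          p a b * W a * (q b i j * U i * V j))
        + (∑ a : Fin n, ∑ b : Fin n, ∑ i : Fin n, ∑ j : Fin n,
          p a b * W a * (p i j * U2 b i * V j))
        + (∑ a : Fin n, ∑ b : Fin n, ∑ i : Fin n, ∑ j : Fin n,
          p a b * W a * (p i j * U i * V2 b j)) := by
    intro W U V U2 V2
    rw [← Finset.sum_add_distrib, ← Finset.sum_add_distrib]
    refine Finset.sum_congr rfl fun a _ => ?_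
    rw [← Finset.sum_add_distrib, ← Finset.sum_add_distrib]
    refine Finset.sum_congr rfl fun b _ => ?_
    rw [← Finset.sum_add_distrib, ← Finset.sum_add_distrib]
    refine Finset.sum_congr rfl fun i _ => ?_
    rw [← Finset.sum_add_distrib, ← Finset.sum_add_distrib]
    exact Finset.sum_congr rfl fun j _ => by ring
  rw [split F G H G2 H2, split G H F H2 F2, split H F G F2 G2]
  have hA := firstorder p q F G H hJ
  have hXG := cancel p F H G2 hp hG2
  have hYH := cancel p G F H2 hp hH2
  have hZF := cancel p H G F2 hp hF2
  linarith [hA, hXG, hYH, hZF]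

end alg

lemma antisym_zero {n : ℕ} {J : Fin n → Fin n → Fin n → ℝ}
    (h12 : ∀ i j k, J i j k = -J j i k) (h23 : ∀ i j k, J i j k = -J i k j)
    (hs : ∀ i j k : Fin n, (i : ℕ) < (j : ℕ) → (j : ℕ) < (k : ℕ) → J i j k = 0) :
    ∀ i j k, J i j k = 0 := by
  intro i j k
  rcases lt_trichotomy (i : ℕ) (j : ℕ) with hij | hij | hij
  · rcases lt_trichotomy (j : ℕ) (k : ℕ) with hjk | hjk | hjk
    · exact hs i j k hij hjk
    · have : j = k := Fin.ext hjk; subst this; linarith [h23 i j j]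
    · rcases lt_trichotomy (i : ℕ) (k : ℕ) with hik | hik | hik
      · linarith [h23 i j k, hs i k j hik hjk]
      · have : i = k := Fin.ext hik; subst this
        linarith [h23 i j i, h12 i i j]
      · linarith [h23 i j k, h12 i k j, hs k i j hik hij]
  · have : i = j := Fin.ext hij; subst this; linarith [h12 i i k]
  · rcases lt_trichotomy (j : ℕ) (k : ℕ) with hjk | hjk | hjk
    · rcases lt_trichotomy (i : ℕ) (k : ℕ) with hik | hik | hik
      · linarith [h12 i j k, hs j i k hij hik]
      · have : i = k := Fin.ext hik; subst this
        linarith [h23 i j i, h12 i i j]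
      · linarith [h12 i j k, h23 j i k, hs j k i hjk hik]
    · have : j = k := Fin.ext hjk; subst this; linarith [h23 i j j]
    · linarith [h12 i j k, h23 j i k, h12 j k i, hs k j i hjk hij]

section expand
variable {n : ℕ} (P : Fin n → Fin n → (Fin n → ℝ) → ℝ)

lemma pd_pb (hP : ∀ i j, ContDiff ℝ (⊤ : ℕ∞) (P i j)) {g h : (Fin n → ℝ) → ℝ}
    (hg : ContDiff ℝ (⊤ : ℕ∞) g) (hh : ContDiff ℝ (⊤ : ℕ∞) h) (b : Fin n) (x : Fin n → ℝ) :
    pd b (pb P g h) x = ∑ i : Fin n, ∑ j : Fin n,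
      (pd b (P i j) x * pd i g x * pd j h x
        + P i j x * pd b (pd i g) x * pd j h x
        + P i j x * pd i g x * pd b (pd j h) x) := by
  have hterm : ∀ i j : Fin n, ContDiff ℝ (⊤ : ℕ∞) (fun y => P i j y * pd i g y * pd j h y) :=
    fun i j => ((hP i j).mul (contDiff_pd hg i)).mul (contDiff_pd hh j)
  have h1 : pb P g h = fun y => ∑ i : Fin n, ∑ j : Fin n, P i j y * pd i g y * pd j h y := rfl
  rw [h1, pd_sum Finset.univ (fun i => fun y => ∑ j : Fin n, P i j y * pd i g y * pd j h y) b x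
    (fun i _ => DifferentiableAt.fun_sum fun j _ => (hterm i j).differentiable (by simp) x)]
  refine Finset.sum_congr rfl fun i _ => ?_
  rw [pd_sum Finset.univ (fun j => fun y => P i j y * pd i g y * pd j h y) b x
    (fun j _ => (hterm i j).differentiable (by simp) x)]
  refine Finset.sum_congr rfl fun j _ => ?_
  exact pd_mul3 ((hP i j).differentiable (by simp) x) ((contDiff_pd hg i).differentiable (by simp) x)
    ((contDiff_pd hh j).differentiable (by simp) x) b

lemma pb_expand (hP : ∀ i j, ContDiff ℝ (⊤ : ℕ∞) (P i j)) {f g h : (Fin n → ℝ) → ℝ}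
    (hg : ContDiff ℝ (⊤ : ℕ∞) g) (hh : ContDiff ℝ (⊤ : ℕ∞) h) (x : Fin n → ℝ) :
    pb P f (pb P g h) x = ∑ a : Fin n, ∑ b : Fin n, ∑ i : Fin n, ∑ j : Fin n,
      P a b x * pd a f x *
        (pd b (P i j) x * pd i g x * pd j h x
          + P i j x * pd b (pd i g) x * pd j h x
          + P i j x * pd i g x * pd b (pd j h) x) := by
  rw [pb]
  refine Finset.sum_congr rfl fun a _ => ?_
  refine Finset.sum_congr rfl fun b _ => ?_
  rw [pd_pb P hP hg hh b x, Finset.mul_sum]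
  exact Finset.sum_congr rfl fun i _ => by rw [Finset.mul_sum]

lemma pb_coord_left (w : (Fin n → ℝ) → ℝ) (i : Fin n) (x : Fin n → ℝ) :
    pb P (fun y => y i) w x = ∑ b : Fin n, P i b x * pd b w x := by
  rw [pb]
  have h1 : ∀ a : Fin n, (∑ b : Fin n, P a b x * pd a (fun y => y i) x * pd b w x)
      = if a = i then ∑ b : Fin n, P a b x * pd b w x else 0 := by
    intro a
    by_cases h : a = i <;> simp [pd_coord, h]
  rw [Finset.sum_congr rfl fun a _ => h1 a]
  simp

lemma pb_coord_coord (j k : Fin n) (x : Fin n → ℝ) :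
    pb P (fun y => y j) (fun y => y k) x = P j k x := by
  rw [pb]
  have h1 : ∀ a b : Fin n, P a b x * pd a (fun y => y j) x * pd b (fun y => y k) x
      = if a = j then (if b = k then P a b x else 0) else 0 := by
    intro a b
    by_cases h : a = j <;> by_cases h' : b = k <;> simp [pd_coord, h, h']
  rw [Finset.sum_congr rfl fun a _ => Finset.sum_congr rfl fun b _ => h1 a b]
  simp

end expand

/-- An antisymmetric biderivation satisfies the Jacobi identity for all triples of
(smooth) functions as soon as it does so on all triples of coordinate functions
`(x_i, x_j, x_k)` with `i < j < k`. -/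
theorem jacobi_of_jacobi_on_coordinates (n : ℕ)
    (P : Fin n → Fin n → (Fin n → ℝ) → ℝ)
    (hP : ∀ i j, ContDiff ℝ (⊤ : ℕ∞) (P i j))
    (hanti : ∀ i j x, P i j x = -(P j i x))
    (hcoord : ∀ i j k : Fin n, (i : ℕ) < (j : ℕ) → (j : ℕ) < (k : ℕ) → ∀ x,
      pb P (fun y => y i) (pb P (fun y => y j) (fun y => y k)) x
      + pb P (fun y => y j) (pb P (fun y => y k) (fun y => y i)) x
      + pb P (fun y => y k) (pb P (fun y => y i) (fun y => y j)) x = 0) :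
    ∀ f g h : (Fin n → ℝ) → ℝ, ContDiff ℝ (⊤ : ℕ∞) f → ContDiff ℝ (⊤ : ℕ∞) g → ContDiff ℝ (⊤ : ℕ∞) h →
      ∀ x, pb P f (pb P g h) x + pb P g (pb P h f) x + pb P h (pb P f g) x = 0 := by
  intro f g h hf hg hh x
  have hq : ∀ (b i j : Fin n), pd b (P i j) x = -(pd b (P j i) x) := by
    intro b i j
    have hPanti : P i j = fun y => -(P j i y) := funext fun y => hanti i j y
    rw [hPanti, pd_neg]
  set Jf : Fin n → Fin n → Fin n → ℝ := fun i j k => ∑ b : Fin n,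
    (P i b x * pd b (P j k) x + P j b x * pd b (P k i) x + P k b x * pd b (P i j) x)
    with hJfdef
  have h12 : ∀ i j k, Jf i j k = -Jf j i k := by
    intro i j k
    rw [hJfdef]
    simp only
    rw [← Finset.sum_neg_distrib]
    refine Finset.sum_congr rfl fun b _ => ?_
    rw [hq b i k, hq b k j, hq b j i]
    ring
  have h23 : ∀ i j k, Jf i j k = -Jf i k j := by
    intro i j k
    rw [hJfdef]
    simp only
    rw [← Finset.sum_neg_distrib]
    refine Finset.sum_congr rfl fun b _ => ?_
    rw [hq b k j, hq b j i, hq b i k]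
    ring
  have hsorted : ∀ i j k : Fin n, (i : ℕ) < (j : ℕ) → (j : ℕ) < (k : ℕ) → Jf i j k = 0 := by
    intro i j k hij hjk
    have hc := hcoord i j k hij hjk x
    have e : ∀ a b : Fin n, pb P (fun y => y a) (fun y => y b) = P a b :=
      fun a b => funext fun y => pb_coord_coord P a b y
    rw [e j k, e k i, e i j, pb_coord_left P _ i x, pb_coord_left P _ j x,
      pb_coord_left P _ k x] at hc
    have hsum : Jf i j k = (∑ b : Fin n, P i b x * pd b (P j k) x)
        + (∑ b : Fin n, P j b x * pd b (P k i) x)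
        + (∑ b : Fin n, P k b x * pd b (P i j) x) := by
      rw [hJfdef]
      simp only
      rw [Finset.sum_add_distrib, Finset.sum_add_distrib]
    rw [hsum]
    linarith [hc]
  have hJ0 := antisym_zero h12 h23 hsorted
  rw [pb_expand P hP hg hh x, pb_expand P hP hh hf x, pb_expand P hP hf hg x]
  exact key_alg (fun i j => P i j x) (fun b i j => pd b (P i j) x)
    (fun a => pd a f x) (fun a => pd a g x) (fun a => pd a h x)
    (fun b i => pd b (pd i f) x) (fun b i => pd b (pd i g) x) (fun b i => pd b (pd i h) x)
    (fun i j => hanti i j x)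
    (fun i j => pd_symm hf i j x) (fun i j => pd_symm hg i j x) (fun i j => pd_symm hh i j x)
    hJ0
end

section
/- For the quadratic Poisson bracket {x_i,x_j} = x_i x_j (i<j) on F(x_1,...,x_n) with n odd, the function C = (x_1 x_3 ... x_n)/(x_2 x_4 ... x_{n-1}) is a Casimir: {C, f} = 0 for every rational function f. -/
noncomputable def lv {n : ℕ} : Fin n → Fin n → (Fin n → ℝ) → ℝ :=
  fun i j x => if (i : ℕ) < (j : ℕ) then x i * x j
    else if (j : ℕ) < (i : ℕ) then -(x i * x j) else 0

/-- `C = (x_1 x_3 ⋯ x_n)/(x_2 x_4 ⋯ x_{n-1})`: the alternating product of the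
odd-indexed variables (in 1-based indexing, i.e. even 0-based indices) over the
even-indexed ones. -/
noncomputable def Cas (n : ℕ) : (Fin n → ℝ) → ℝ := fun x =>
  (∏ i : Fin n, if (i : ℕ) % 2 = 0 then x i else 1) /
  (∏ i : Fin n, if (i : ℕ) % 2 = 1 then x i else 1)

/-- factor functions -/
noncomputable def phi {n : ℕ} (i : Fin n) : (Fin n → ℝ) → ℝ :=
  fun y => if (i : ℕ) % 2 = 0 then y i else (y i)⁻¹

lemma Cas_eq_prod {n : ℕ} (y : Fin n → ℝ) (hy : ∀ i, y i ≠ 0) :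
    Cas n y = ∏ i : Fin n, phi i y := by
  unfold Cas phi
  rw [div_eq_mul_inv, ← Finset.prod_inv_distrib, ← Finset.prod_mul_distrib]
  refine Finset.prod_congr rfl fun i _ => ?_
  rcases Nat.mod_two_eq_zero_or_one (i : ℕ) with h | h <;> simp [h]

lemma pd_Cas {n : ℕ} (x : Fin n → ℝ) (hx : ∀ i, x i ≠ 0) (k : Fin n) :
    pd k (Cas n) x = (-1) ^ (k : ℕ) * Cas n x / x k := by
  classical
  set c : Fin n → ℝ := fun i => if (i : ℕ) % 2 = 0 then 1 else -(x i ^ 2)⁻¹ with hc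
  have hphi : ∀ i : Fin n, HasFDerivAt (phi i)
      (c i • (ContinuousLinearMap.proj i : (Fin n → ℝ) →L[ℝ] ℝ)) x := by
    intro i
    unfold phi
    have hproj : HasFDerivAt (fun y : Fin n → ℝ => y i)
        (ContinuousLinearMap.proj i : (Fin n → ℝ) →L[ℝ] ℝ) x :=
      hasFDerivAt_apply i x
    by_cases h : (i : ℕ) % 2 = 0
    · have hci : c i = 1 := by simp [hc, h]
      simp only [h, if_true, hci, one_smul]
      exact hproj
    · have hci : c i = -(x i ^ 2)⁻¹ := by simp [hc, h]
      simp only [h, if_false, hci]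
      exact (hasDerivAt_inv (hx i)).comp_hasFDerivAt x hproj
  have hD : HasFDerivAt (fun y => ∏ i : Fin n, phi i y)
      (∑ i : Fin n, (∏ j ∈ Finset.univ.erase i, phi j x) •
        (c i • (ContinuousLinearMap.proj i : (Fin n → ℝ) →L[ℝ] ℝ))) x :=
    HasFDerivAt.finset_prod fun i _ => hphi i
  have hev : Cas n =ᶠ[nhds x] (fun y => ∏ i : Fin n, phi i y) := by
    have h1 : ∀ᶠ y in nhds x, ∀ i, y i ≠ 0 := by
      rw [Filter.eventually_all]
      intro i
      exact (continuous_apply i).continuousAt.eventually_ne (hx i)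
    filter_upwards [h1] with y hy using Cas_eq_prod y hy
  have hfd : fderiv ℝ (Cas n) x =
      ∑ i : Fin n, (∏ j ∈ Finset.univ.erase i, phi j x) •
        (c i • (ContinuousLinearMap.proj i : (Fin n → ℝ) →L[ℝ] ℝ)) := by
    rw [hev.fderiv_eq, hD.fderiv]
  unfold pd
  rw [hfd]
  have happ : (∑ i : Fin n, (∏ j ∈ Finset.univ.erase i, phi j x) •
      (c i • (ContinuousLinearMap.proj i : (Fin n → ℝ) →L[ℝ] ℝ))) (Pi.single k 1)
      = ∑ i : Fin n, (∏ j ∈ Finset.univ.erase i, phi j x) * (c i * ((Pi.single k 1 : Fin n → ℝ) i)) := by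
    simp [ContinuousLinearMap.sum_apply]
  rw [happ]
  rw [Finset.sum_eq_single k]
  · have hCx : Cas n x = phi k x * ∏ j ∈ Finset.univ.erase k, phi j x := by
      rw [Cas_eq_prod x hx, ← Finset.mul_prod_erase _ _ (Finset.mem_univ k)]
    rw [hCx]
    simp only [Pi.single_eq_same, mul_one]
    by_cases h : (k : ℕ) % 2 = 0
    · rw [(Nat.even_iff.2 h).neg_one_pow, one_mul]
      have hck : c k = 1 := by simp [hc, h]
      have hpk : phi k x = x k := by simp [phi, h]
      rw [hck, mul_one, hpk, mul_div_cancel_left₀ _ (hx k)]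
    · have h1 : (k : ℕ) % 2 = 1 := Nat.mod_two_eq_zero_or_one _ |>.resolve_left h
      rw [(Nat.odd_iff.2 h1).neg_one_pow]
      have hck : c k = -(x k ^ 2)⁻¹ := by simp [hc, h]
      have hpk : phi k x = (x k)⁻¹ := by simp [phi, h]
      rw [hck, hpk]
      field_simp
  · intro b _ hb
    simp [Pi.single_eq_of_ne hb]
  · simp

lemma sign_sum_zero {n : ℕ} (hn : Odd n) (j : Fin n) :
    ∑ i : Fin n, (if (i : ℕ) < (j : ℕ) then (1:ℝ)
      else if (j : ℕ) < (i : ℕ) then -1 else 0) * (-1) ^ (i : ℕ) = 0 := by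
  set J := (j : ℕ) with hJdef
  have hJ : J < n := j.isLt
  set g : ℕ → ℝ := fun i => (if i < J then (1:ℝ) else if J < i then -1 else 0) * (-1) ^ i
    with hg
  rw [Fin.sum_univ_eq_sum_range g]
  have hsplit : ∑ i ∈ Finset.range (J+1), g i + ∑ i ∈ Finset.Ico (J+1) n, g i
      = ∑ i ∈ Finset.range n, g i := by
    rw [Finset.range_eq_Ico, Finset.range_eq_Ico]
    exact Finset.sum_Ico_consecutive g (Nat.zero_le _) hJ
  have hgJ : g J = 0 := by simp [hg]
  have h1 : ∑ i ∈ Finset.range (J+1), g i = ∑ i ∈ Finset.range J, (-1:ℝ) ^ i := by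
    rw [Finset.sum_range_succ, hgJ, add_zero]
    refine Finset.sum_congr rfl fun i hi => ?_
    rw [hg]
    simp only [if_pos (Finset.mem_range.1 hi), one_mul]
  have h2 : ∑ i ∈ Finset.Ico (J+1) n, g i = -∑ i ∈ Finset.Ico (J+1) n, (-1:ℝ) ^ i := by
    rw [← Finset.sum_neg_distrib]
    refine Finset.sum_congr rfl fun i hi => ?_
    have hlt : J < i := (Finset.mem_Ico.1 hi).1
    rw [hg]
    simp only [if_neg (Nat.lt_asymm hlt), if_pos hlt]
    ring
  have h3 : ∑ i ∈ Finset.Ico (J+1) n, (-1:ℝ) ^ i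
      = ∑ i ∈ Finset.range n, (-1:ℝ) ^ i - ∑ i ∈ Finset.range (J+1), (-1:ℝ) ^ i := by
    rw [Finset.range_eq_Ico, Finset.range_eq_Ico, eq_sub_iff_add_eq, add_comm]
    exact Finset.sum_Ico_consecutive _ (Nat.zero_le _) hJ
  have := hsplit
  rw [h1, h2, h3] at this
  rw [← this]
  simp only [neg_one_geom_sum]
  have hne : ¬ Even n := Nat.not_even_iff_odd.2 hn
  rcases Nat.even_or_odd J with hE | hO
  · simp [hE, Nat.even_add_one, hne]
  · simp [Nat.even_add_one, hne, Nat.not_even_iff_odd.2 hO]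


/-- For `n` odd, `C` is a Casimir of the quadratic bracket `{x_i,x_j} = x_i x_j` (i<j):
it Poisson-commutes with every function. -/
theorem Cas_is_Casimir (n : ℕ) (hn : Odd n)
    (f : (Fin n → ℝ) → ℝ) (hf : ContDiff ℝ (⊤ : ℕ∞) f)
    (x : Fin n → ℝ) (hx : ∀ i, x i ≠ 0) :
    pb lv (Cas n) f x = 0 := by
  unfold pb
  rw [Finset.sum_comm]
  refine Finset.sum_eq_zero fun j _ => ?_
  have hinner : ∑ i : Fin n, lv i j x * pd i (Cas n) x = 0 := by
    have hterm : ∀ i : Fin n, lv i j x * pd i (Cas n) x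
        = (x j * Cas n x) * ((if (i : ℕ) < (j : ℕ) then (1:ℝ)
            else if (j : ℕ) < (i : ℕ) then -1 else 0) * (-1) ^ (i : ℕ)) := by
      intro i
      rw [pd_Cas x hx i]
      unfold lv
      rcases lt_trichotomy (i : ℕ) (j : ℕ) with h | h | h
      · rw [if_pos h, if_pos h]
        field_simp [hx i]
      · have h1 : ¬ (i : ℕ) < (j : ℕ) := by omega
        have h2 : ¬ (j : ℕ) < (i : ℕ) := by omega
        rw [if_neg h1, if_neg h2, if_neg h1, if_neg h2]
        ring
      · have h1 : ¬ (i : ℕ) < (j : ℕ) := by omega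
        rw [if_neg h1, if_pos h, if_neg h1, if_pos h]
        field_simp [hx i]
    rw [Finset.sum_congr rfl fun i _ => hterm i, ← Finset.mul_sum,
      sign_sum_zero hn j, mul_zero]
  calc ∑ i : Fin n, lv i j x * pd i (Cas n) x * pd j f x
      = (∑ i : Fin n, lv i j x * pd i (Cas n) x) * pd j f x := by
        rw [Finset.sum_mul]
    _ = 0 := by rw [hinner, zero_mul]
end

section
/- For n = 5, H = x_1+...+x_5 is maximally superintegrable with the four functionally independent first integrals H, F, G, C; in particular the four functions H, F = (x_1+x_2+x_3)x_5/x_4, G = (x_5+x_4+x_3)x_1/x_2, C = x_1x_3x_5/(x_2x_4) are functionally (algebraically) independent. -/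
set_option maxHeartbeats 1000000


noncomputable def H5 : (Fin 5 → ℝ) → ℝ := fun x => x 0 + x 1 + x 2 + x 3 + x 4
noncomputable def F5 : (Fin 5 → ℝ) → ℝ := fun x => (x 0 + x 1 + x 2) * x 4 / x 3
noncomputable def G5 : (Fin 5 → ℝ) → ℝ := fun x => (x 4 + x 3 + x 2) * x 0 / x 1
noncomputable def C5 : (Fin 5 → ℝ) → ℝ := fun x => x 0 * x 2 * x 4 / (x 1 * x 3)

lemma proj5 (x : Fin 5 → ℝ) : ∀ i : Fin 5, HasFDerivAt (fun y : Fin 5 → ℝ => y i)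
    (ContinuousLinearMap.proj i : (Fin 5 → ℝ) →L[ℝ] ℝ) x := fun i => hasFDerivAt_apply i x

lemma pd_H5 (x : Fin 5 → ℝ) (j : Fin 5) : pd j H5 x = 1 := by
  have p := proj5 x
  have hH := ((((p 0).add (p 1)).add (p 2)).add (p 3)).add (p 4)
  erw [pd, show H5 = fun y : Fin 5 → ℝ => y 0 + y 1 + y 2 + y 3 + y 4 from rfl, hH.fderiv]
  fin_cases j <;> simp [ContinuousLinearMap.proj_apply, Pi.single_apply]

lemma pd_F5 (x : Fin 5 → ℝ) (h3 : x 3 ≠ 0) (j : Fin 5) :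
    pd j F5 x = ![x 4 / x 3, x 4 / x 3, x 4 / x 3,
      -((x 0 + x 1 + x 2) * x 4 / x 3 ^ 2), (x 0 + x 1 + x 2) / x 3] j := by
  have p := proj5 x
  have hinv : HasFDerivAt (fun y : Fin 5 → ℝ => (y 3)⁻¹) _ x :=
    (hasFDerivAt_inv' (𝕜 := ℝ) h3).comp x (p 3)
  have heq : F5 = fun y : Fin 5 → ℝ => (y 0 + y 1 + y 2) * y 4 * (y 3)⁻¹ := by
    funext y; simp [F5, div_eq_mul_inv]
  have hF := ((((p 0).add (p 1)).add (p 2)).mul (p 4)).mul hinv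
  erw [pd, heq, hF.fderiv]
  fin_cases j <;>
    simp [ContinuousLinearMap.proj_apply, Pi.single_apply,
      ContinuousLinearMap.mulLeftRight_apply] <;>
    field_simp <;> (try ring) <;> (try (left; ring))

lemma pd_G5 (x : Fin 5 → ℝ) (h1 : x 1 ≠ 0) (j : Fin 5) :
    pd j G5 x = ![(x 4 + x 3 + x 2) / x 1, -((x 4 + x 3 + x 2) * x 0 / x 1 ^ 2),
      x 0 / x 1, x 0 / x 1, x 0 / x 1] j := by
  have p := proj5 x
  have hinv : HasFDerivAt (fun y : Fin 5 → ℝ => (y 1)⁻¹) _ x :=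
    (hasFDerivAt_inv' (𝕜 := ℝ) h1).comp x (p 1)
  have heq : G5 = fun y : Fin 5 → ℝ => (y 4 + y 3 + y 2) * y 0 * (y 1)⁻¹ := by
    funext y; simp [G5, div_eq_mul_inv]
  have hG := ((((p 4).add (p 3)).add (p 2)).mul (p 0)).mul hinv
  erw [pd, heq, hG.fderiv]
  fin_cases j <;>
    simp [ContinuousLinearMap.proj_apply, Pi.single_apply,
      ContinuousLinearMap.mulLeftRight_apply] <;>
    field_simp <;> (try ring) <;> (try (left; ring))

lemma pd_C5 (x : Fin 5 → ℝ) (h1 : x 1 ≠ 0) (h3 : x 3 ≠ 0) (j : Fin 5) :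
    pd j C5 x = ![x 2 * x 4 / (x 1 * x 3), -(x 0 * x 2 * x 4 / (x 1 ^ 2 * x 3)),
      x 0 * x 4 / (x 1 * x 3), -(x 0 * x 2 * x 4 / (x 1 * x 3 ^ 2)),
      x 0 * x 2 / (x 1 * x 3)] j := by
  have p := proj5 x
  have hinv : HasFDerivAt (fun y : Fin 5 → ℝ => (y 1 * y 3)⁻¹) _ x :=
    (hasFDerivAt_inv' (𝕜 := ℝ) (mul_ne_zero h1 h3)).comp x ((p 1).mul (p 3))
  have heq : C5 = fun y : Fin 5 → ℝ => y 0 * y 2 * y 4 * (y 1 * y 3)⁻¹ := by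
    funext y; simp [C5, div_eq_mul_inv]
  have hC := (((p 0).mul (p 2)).mul (p 4)).mul hinv
  erw [pd, heq, hC.fderiv]
  fin_cases j <;>
    simp [ContinuousLinearMap.proj_apply, Pi.single_apply,
      ContinuousLinearMap.mulLeftRight_apply] <;>
    field_simp <;> (try ring) <;> (try (left; ring))

/-- For `n = 5`, `H` is maximally superintegrable: `F, G, C` are first integrals
of `H`, and the four functions `H, F, G, C` are functionally independent (their
gradients are linearly independent at a generic point). -/
theorem H5_maximally_superintegrable :
    (∀ x : Fin 5 → ℝ, (∀ i, x i ≠ 0) →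
      pb lv H5 F5 x = 0 ∧ pb lv H5 G5 x = 0 ∧ pb lv H5 C5 x = 0) ∧
    (∃ x : Fin 5 → ℝ, (∀ i, x i ≠ 0) ∧
      LinearIndependent ℝ
        ![fun j => pd j H5 x, fun j => pd j F5 x,
          fun j => pd j G5 x, fun j => pd j C5 x]) := by
  constructor
  · intro x hx
    have h1 := hx 1
    have h3 := hx 3
    refine ⟨?_, ?_, ?_⟩
    · simp (config := { decide := true }) only [pb, Fin.sum_univ_five, pd_H5 x, pd_F5 x h3, lv, Matrix.cons_val]
      norm_num [Matrix.cons_val_zero, Matrix.cons_val_one]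
      field_simp
      ring
    · simp (config := { decide := true }) only [pb, Fin.sum_univ_five, pd_H5 x, pd_G5 x h1, lv, Matrix.cons_val]
      norm_num [Matrix.cons_val_zero, Matrix.cons_val_one]
      field_simp
      ring
    · simp (config := { decide := true }) only [pb, Fin.sum_univ_five, pd_H5 x, pd_C5 x h1 h3, lv, Matrix.cons_val]
      norm_num [Matrix.cons_val_zero, Matrix.cons_val_one]
      field_simp
      ring
  · refine ⟨fun _ => 1, fun i => one_ne_zero, ?_⟩
    set x : Fin 5 → ℝ := fun _ => 1 with hxdef
    have h1 : x 1 ≠ 0 := one_ne_zero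
    have h3 : x 3 ≠ 0 := one_ne_zero
    rw [Fintype.linearIndependent_iff]
    intro g hg
    have e : ∀ k : Fin 5,
        g 0 * pd k H5 x + g 1 * pd k F5 x + g 2 * pd k G5 x + g 3 * pd k C5 x = 0 := by
      intro k
      have := congrFun hg k
      simpa [Fin.sum_univ_four, mul_comm] using this
    have e0 := e 0; have e1 := e 1; have e2 := e 2; have e3 := e 3; have e4 := e 4
    simp only [pd_H5 x, pd_F5 x h3, pd_G5 x h1, pd_C5 x h1 h3, Matrix.cons_val] at e0 e1 e2 e3 e4
    simp (config := { decide := true }) [pd_H5 x, pd_F5 x h3, pd_G5 x h1, pd_C5 x h1 h3, hxdef, Matrix.cons_val] at e0 e1 e2 e3 e4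
    have hg1 : g 1 = 0 := by linarith
    have hg3 : g 3 = 0 := by linarith
    have hg2 : g 2 = 0 := by linarith
    have hg0 : g 0 = 0 := by linarith
    intro i
    fin_cases i
    · exact hg0
    · exact hg1
    · exact hg2
    · exact hg3
end

section
/- For n = 2m-1 odd, the functions F_k = (Σ_{ℓ=1}^{2k-1} x_ℓ) ∏_{s=k}^{(n-1)/2} x_{2s+1}/x_{2s}, k = 1,...,m, are pairwise in involution with respect to the bracket {x_i,x_j} = x_i x_j (i<j): {F_i, F_j} = 0 for all i, j. -/
/-- `x_ℓ` (1-based) as a function of `x : Fin n → ℝ` (0-based), i.e. `get x ℓ = x_{ℓ+1}`. -/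
def get {n : ℕ} (x : Fin n → ℝ) (i : ℕ) : ℝ := if h : i < n then x ⟨i, h⟩ else 0

/-- For `n = 2m-1` odd, the integral
`F_k = (Σ_{ℓ=1}^{2k-1} x_ℓ) ∏_{s=k}^{(n-1)/2} x_{2s+1}/x_{2s}` (1-based indices). -/
noncomputable def Fodd (m k : ℕ) : (Fin (2*m-1) → ℝ) → ℝ := fun x =>
  (∑ ℓ ∈ Finset.range (2*k-1), get x ℓ) *
  ∏ s ∈ Finset.Icc k (m-1), get x (2*s) / get x (2*s-1)

open Finset

namespace FoddAux


noncomputable def sg (a b : ℕ) : ℝ := if a < b then 1 else if b < a then -1 else 0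

noncomputable def W (X : ℕ → ℝ) (k : ℕ) (a : ℕ) : ℝ :=
  if a < 2*k-1 then X a else (∑ ℓ ∈ Finset.range (2*k-1), X ℓ) * (-1)^a

lemma altsum (t : ℕ) : ∑ a ∈ Finset.range t, (-1:ℝ)^a = if Even t then 0 else 1 := by
  induction t with
  | zero => simp
  | succ t ih =>
    rw [Finset.sum_range_succ, ih]
    rcases Nat.even_or_odd t with h | h
    · simp [h, Nat.even_add_one, h.neg_one_pow]
    · simp [h.neg_one_pow, Nat.even_add_one, Nat.not_even_iff_odd.mpr h]

lemma sqsum (X : ℕ → ℝ) (t : ℕ) :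
    ∑ b ∈ Finset.range t, X b * (2 * (∑ a ∈ Finset.range b, X a) + X b)
      = (∑ a ∈ Finset.range t, X a)^2 := by
  induction t with
  | zero => simp
  | succ t ih =>
    rw [Finset.sum_range_succ, Finset.sum_range_succ (f := X), ih]
    ring

lemma inner_sum (n b : ℕ) (hb : b < n) (f : ℕ → ℝ) :
    ∑ a ∈ Finset.range n, sg a b * f a
      = 2 * (∑ a ∈ Finset.range b, f a) + f b - ∑ a ∈ Finset.range n, f a := by
  have key : ∀ g : ℕ → ℝ, ∑ a ∈ Finset.range n, g a
      = (∑ a ∈ Finset.range b, g a) + g b + ∑ a ∈ Finset.Ico (b+1) n, g a := by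
    intro g
    rw [← Finset.sum_range_succ, Finset.sum_range_add_sum_Ico _ (Nat.succ_le_of_lt hb)]
  rw [key (fun a => sg a b * f a), key f]
  have e1 : ∑ a ∈ Finset.range b, sg a b * f a = ∑ a ∈ Finset.range b, f a := by
    refine Finset.sum_congr rfl fun a ha => ?_
    rw [Finset.mem_range] at ha
    rw [sg, if_pos ha, one_mul]
  have e2 : sg b b * f b = 0 := by rw [sg]; simp
  have e3 : ∑ a ∈ Finset.Ico (b+1) n, sg a b * f a = -∑ a ∈ Finset.Ico (b+1) n, f a := by
    rw [← Finset.sum_neg_distrib]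
    refine Finset.sum_congr rfl fun a ha => ?_
    rw [Finset.mem_Ico] at ha
    rw [sg, if_neg (by omega), if_pos (by omega)]
    ring
  rw [e1, e2, e3]
  ring

lemma key_le (m i j : ℕ) (hi1 : 1 ≤ i) (hij : i ≤ j) (hjm : j ≤ m) (X : ℕ → ℝ) :
    ∑ a ∈ Finset.range (2*m-1), ∑ b ∈ Finset.range (2*m-1),
      sg a b * W X i a * W X j b = 0 := by
  set n := 2*m-1 with hn
  set Si := ∑ ℓ ∈ Finset.range (2*i-1), X ℓ with hSi
  have pref : ∀ b, 2*i-1 ≤ b → ∑ a ∈ Finset.range b, W X i a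
      = Si * (if Even b then 0 else 1) := by
    intro b hb
    rw [← Finset.sum_range_add_sum_Ico _ hb]
    have e1 : ∑ a ∈ Finset.range (2*i-1), W X i a = Si := by
      refine Finset.sum_congr rfl fun a ha => ?_
      rw [Finset.mem_range] at ha
      rw [W, if_pos ha]
    have e2 : ∑ a ∈ Finset.Ico (2*i-1) b, W X i a
        = Si * ((if Even b then (0:ℝ) else 1) - 1) := by
      have : ∑ a ∈ Finset.Ico (2*i-1) b, W X i a
          = Si * ∑ a ∈ Finset.Ico (2*i-1) b, (-1:ℝ)^a := by
        rw [Finset.mul_sum]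
        refine Finset.sum_congr rfl fun a ha => ?_
        rw [Finset.mem_Ico] at ha
        rw [W, if_neg (by omega)]
      rw [this, Finset.sum_Ico_eq_sub _ hb, altsum, altsum]
      have : ¬ Even (2*i-1) := by
        rw [Nat.even_iff]; omega
      rw [if_neg this]
    rw [e1, e2]; ring
  have total : ∑ a ∈ Finset.range n, W X i a = Si := by
    rw [pref n (by omega)]
    have : ¬ Even n := by rw [Nat.even_iff]; omega
    rw [if_neg this, mul_one]
  rw [Finset.sum_comm]
  have step1 : ∀ b ∈ Finset.range n, ∑ a ∈ Finset.range n, sg a b * W X i a * W X j b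
      = W X j b * (2 * (∑ a ∈ Finset.range b, W X i a) + W X i b - Si) := by
    intro b hb
    rw [Finset.mem_range] at hb
    have : ∀ a, sg a b * W X i a * W X j b = (sg a b * W X i a) * W X j b := by
      intro a; ring
    calc ∑ a ∈ Finset.range n, sg a b * W X i a * W X j b
        = (∑ a ∈ Finset.range n, sg a b * W X i a) * W X j b := by
          rw [Finset.sum_mul]
      _ = W X j b * (2 * (∑ a ∈ Finset.range b, W X i a) + W X i b - Si) := by
          rw [inner_sum n b hb, ← total]; ring
  rw [Finset.sum_congr rfl step1]
  rw [← Finset.sum_range_add_sum_Ico _ (show 2*i-1 ≤ n by omega)]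
  have right : ∑ b ∈ Finset.Ico (2*i-1) n, W X j b *
      (2 * (∑ a ∈ Finset.range b, W X i a) + W X i b - Si) = 0 := by
    refine Finset.sum_eq_zero fun b hbm => ?_
    rw [Finset.mem_Ico] at hbm
    have hz : 2 * (∑ a ∈ Finset.range b, W X i a) + W X i b - Si = 0 := by
      rw [pref b hbm.1, show W X i b = Si * (-1)^b from by rw [W, if_neg (by omega)]]
      rcases Nat.even_or_odd b with h | h
      · rw [if_pos h, h.neg_one_pow]; ring
      · rw [if_neg (Nat.not_even_iff_odd.mpr h), h.neg_one_pow]; ring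
    rw [hz, mul_zero]
  rw [right, add_zero]
  have left : ∀ b ∈ Finset.range (2*i-1), W X j b *
      (2 * (∑ a ∈ Finset.range b, W X i a) + W X i b - Si)
      = X b * (2 * (∑ a ∈ Finset.range b, X a) + X b) - X b * Si := by
    intro b hb
    rw [Finset.mem_range] at hb
    have h1 : W X j b = X b := by rw [W, if_pos (by omega)]
    have h2 : W X i b = X b := by rw [W, if_pos (by omega)]
    have h3 : ∑ a ∈ Finset.range b, W X i a = ∑ a ∈ Finset.range b, X a := by
      refine Finset.sum_congr rfl fun a ha => ?_
      rw [Finset.mem_range] at ha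
      rw [W, if_pos (by omega)]
    rw [h1, h2, h3]; ring
  rw [Finset.sum_congr rfl left, Finset.sum_sub_distrib, sqsum, ← Finset.sum_mul]
  rw [hSi]
  ring

lemma sg_antisymm (a b : ℕ) : sg a b = -sg b a := by
  unfold sg
  split_ifs <;> (try (exfalso; omega)) <;> ring

lemma key (m i j : ℕ) (hi1 : 1 ≤ i) (him : i ≤ m) (hj1 : 1 ≤ j) (hjm : j ≤ m) (X : ℕ → ℝ) :
    ∑ a ∈ Finset.range (2*m-1), ∑ b ∈ Finset.range (2*m-1),
      sg a b * W X i a * W X j b = 0 := by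
  rcases le_total i j with hij | hji
  · exact key_le m i j hi1 hij hjm X
  · have : ∀ a ∈ Finset.range (2*m-1), ∀ b ∈ Finset.range (2*m-1),
        sg a b * W X i a * W X j b = -(sg b a * W X j b * W X i a) := by
      intro a _ b _
      rw [sg_antisymm a b]; ring
    calc ∑ a ∈ Finset.range (2*m-1), ∑ b ∈ Finset.range (2*m-1), sg a b * W X i a * W X j b
        = ∑ a ∈ Finset.range (2*m-1), ∑ b ∈ Finset.range (2*m-1),
            -(sg b a * W X j b * W X i a) := by
          refine Finset.sum_congr rfl fun a ha => Finset.sum_congr rfl fun b hb => ?_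
          exact this a ha b hb
      _ = -∑ a ∈ Finset.range (2*m-1), ∑ b ∈ Finset.range (2*m-1),
            sg b a * W X j b * W X i a := by
          simp [Finset.sum_neg_distrib]
      _ = -∑ b ∈ Finset.range (2*m-1), ∑ a ∈ Finset.range (2*m-1),
            sg b a * W X j b * W X i a := by
          rw [Finset.sum_comm]
      _ = 0 := by
          rw [show (∑ b ∈ Finset.range (2*m-1), ∑ a ∈ Finset.range (2*m-1),
              sg b a * W X j b * W X i a) = 0 from key_le m j i hj1 hji him X]
          ring



noncomputable def G {n : ℕ} (ℓ : ℕ) : (Fin n → ℝ) →L[ℝ] ℝ :=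
  if h : ℓ < n then ContinuousLinearMap.proj ⟨ℓ, h⟩ else 0

lemma hasFDerivAt_get {n : ℕ} (ℓ : ℕ) (x : Fin n → ℝ) :
    HasFDerivAt (fun y : Fin n → ℝ => get y ℓ) (G ℓ) x := by
  by_cases h : ℓ < n
  · have he : (fun y : Fin n → ℝ => get y ℓ) = fun y => y ⟨ℓ, h⟩ := by
      funext y; exact dif_pos h
    rw [he, G, dif_pos h]
    exact (ContinuousLinearMap.proj (⟨ℓ, h⟩ : Fin n) :
      (Fin n → ℝ) →L[ℝ] ℝ).hasFDerivAt
  · have he : (fun y : Fin n → ℝ => get y ℓ) = fun _ => (0:ℝ) := by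
      funext y; exact dif_neg h
    rw [he, G, dif_neg h]
    exact hasFDerivAt_const 0 x

lemma G_single {n : ℕ} (ℓ : ℕ) (a : Fin n) :
    G ℓ (Pi.single a (1:ℝ)) = if ℓ = (a:ℕ) then 1 else 0 := by
  rw [G]
  by_cases h : ℓ < n
  · rw [dif_pos h]
    simp [Pi.single_apply, Fin.ext_iff, eq_comm]
  · rw [dif_neg h]
    have : ℓ ≠ (a:ℕ) := by have := a.isLt; omega
    simp [this]

noncomputable def Phi {n : ℕ} (x : Fin n → ℝ) (s : ℕ) : (Fin n → ℝ) →L[ℝ] ℝ :=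
  get x (2*s) • ((-((get x (2*s-1))^2)⁻¹) • G (2*s-1)) + (get x (2*s-1))⁻¹ • G (2*s)

lemma hasFDerivAt_factor {n : ℕ} (x : Fin n → ℝ) (s : ℕ) (hden : get x (2*s-1) ≠ 0) :
    HasFDerivAt (fun y : Fin n → ℝ => get y (2*s) / get y (2*s-1)) (Phi x s) x := by
  have h1 := hasFDerivAt_get (n := n) (2*s) x
  have h2 := hasFDerivAt_get (n := n) (2*s-1) x
  have hinv : HasFDerivAt (fun y : Fin n → ℝ => (get y (2*s-1))⁻¹)
      ((-((get x (2*s-1))^2)⁻¹) • G (2*s-1)) x :=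
    (hasDerivAt_inv hden).comp_hasFDerivAt x h2
  have hmul := h1.mul hinv
  have he : (fun y : Fin n → ℝ => get y (2*s) / get y (2*s-1))
      = fun y => get y (2*s) * (get y (2*s-1))⁻¹ := by
    funext y; rw [div_eq_mul_inv]
  rw [he, Phi]
  exact hmul

lemma Phi_single {n : ℕ} (x : Fin n → ℝ) (s : ℕ) (a : Fin n) :
    Phi x s (Pi.single a (1:ℝ))
      = get x (2*s) * ((-((get x (2*s-1))^2)⁻¹) * (if 2*s-1 = (a:ℕ) then 1 else 0))
        + (get x (2*s-1))⁻¹ * (if 2*s = (a:ℕ) then 1 else 0) := by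
  simp only [Phi, ContinuousLinearMap.add_apply, ContinuousLinearMap.smul_apply,
    G_single, smul_eq_mul]

lemma get_ne_zero {n : ℕ} (x : Fin n → ℝ) (hx : ∀ a, x a ≠ 0) {ℓ : ℕ} (h : ℓ < n) :
    get x ℓ ≠ 0 := by
  have he : get x ℓ = x ⟨ℓ, h⟩ := dif_pos h
  rw [he]; exact hx _

lemma get_coe {n : ℕ} (x : Fin n → ℝ) (a : Fin n) : get x (a:ℕ) = x a := by
  have he : get x (a:ℕ) = x ⟨(a:ℕ), a.isLt⟩ := dif_pos a.isLt
  rw [he]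

lemma Pder_single (m k : ℕ) (hk1 : 1 ≤ k) (hkm : k ≤ m) (x : Fin (2*m-1) → ℝ)
    (hx : ∀ a, x a ≠ 0) (a : Fin (2*m-1)) :
    x a * (∑ s ∈ Finset.Icc k (m-1),
        (∏ t ∈ (Finset.Icc k (m-1)).erase s, (get x (2*t) / get x (2*t-1))) • Phi x s)
          (Pi.single a (1:ℝ))
      = (∏ s ∈ Finset.Icc k (m-1), get x (2*s) / get x (2*s-1)) *
          (if 2*k-1 ≤ (a:ℕ) then (-1:ℝ)^(a:ℕ) else 0) := by
  have hA : (a:ℕ) < 2*m-1 := a.isLt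
  rw [ContinuousLinearMap.sum_apply]
  simp only [ContinuousLinearMap.smul_apply, smul_eq_mul, Phi_single]
  have htri : ((a:ℕ) < 2*k-1) ∨ (∃ s0, k ≤ s0 ∧ s0 ≤ m-1 ∧ (a:ℕ) = 2*s0)
      ∨ (∃ s0, k ≤ s0 ∧ s0 ≤ m-1 ∧ (a:ℕ) = 2*s0-1) := by
    by_cases hlow : (a:ℕ) < 2*k-1
    · exact Or.inl hlow
    · rcases Nat.even_or_odd (a:ℕ) with ⟨c, hc⟩ | ⟨c, hc⟩
      · exact Or.inr (Or.inl ⟨c, by omega, by omega, by omega⟩)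
      · exact Or.inr (Or.inr ⟨c+1, by omega, by omega, by omega⟩)
  rcases htri with hlow | ⟨s0, hks0, hs0m, hAe⟩ | ⟨s0, hks0, hs0m, hAe⟩
  · rw [Finset.sum_eq_zero, if_neg (by omega), mul_zero, mul_zero]
    intro s hs
    rw [Finset.mem_Icc] at hs
    rw [if_neg (by omega), if_neg (by omega)]
    ring
  · -- a = 2*s0 (even case)
    have hs0mem : s0 ∈ Finset.Icc k (m-1) := Finset.mem_Icc.mpr ⟨hks0, hs0m⟩
    rw [Finset.sum_eq_single s0]
    · rw [if_neg (by omega), if_pos hAe.symm, if_pos (by omega)]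
      have hpow : (-1:ℝ)^(a:ℕ) = 1 := Even.neg_one_pow ⟨s0, by omega⟩
      rw [hpow, mul_one]
      have hxa : x a = get x (2*s0) := by rw [← get_coe x a, hAe]
      rw [hxa, ← Finset.prod_erase_mul _ _ hs0mem]
      ring
    · intro s hs hne
      rw [Finset.mem_Icc] at hs
      rw [if_neg (by omega), if_neg (by omega)]
      ring
    · intro h; exact absurd hs0mem h
  · -- a = 2*s0 - 1 (odd case)
    have hs0mem : s0 ∈ Finset.Icc k (m-1) := Finset.mem_Icc.mpr ⟨hks0, hs0m⟩
    have hd : get x (2*s0-1) ≠ 0 := get_ne_zero x hx (by omega)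
    rw [Finset.sum_eq_single s0]
    · rw [if_pos hAe.symm, if_neg (by omega), if_pos (by omega)]
      have hpow : (-1:ℝ)^(a:ℕ) = -1 := Odd.neg_one_pow ⟨s0-1, by omega⟩
      rw [hpow]
      have hxa : x a = get x (2*s0-1) := by rw [← get_coe x a, hAe]
      rw [hxa, ← Finset.prod_erase_mul _ _ hs0mem]
      set E := ∏ t ∈ (Finset.Icc k (m-1)).erase s0, (get x (2*t) / get x (2*t-1)) with hE
      set d := get x (2*s0-1) with hdd
      set nu := get x (2*s0) with hnu
      have h1 : d * d⁻¹ = 1 := mul_inv_cancel₀ hd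
      rw [div_eq_mul_inv, pow_two, mul_inv]
      linear_combination (-(nu * d⁻¹ * E)) * h1
    · intro s hs hne
      rw [Finset.mem_Icc] at hs
      rw [if_neg (by omega), if_neg (by omega)]
      ring
    · intro h; exact absurd hs0mem h


lemma xa_pd (m k : ℕ) (hk1 : 1 ≤ k) (hkm : k ≤ m)
    (x : Fin (2*m-1) → ℝ) (hx : ∀ a, x a ≠ 0) (a : Fin (2*m-1)) :
    x a * pd a (Fodd m k) x
      = (∏ s ∈ Finset.Icc k (m-1), get x (2*s) / get x (2*s-1))
          * W (fun ℓ => get x ℓ) k (a:ℕ) := by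
  have hden : ∀ s ∈ Finset.Icc k (m-1), get x (2*s-1) ≠ 0 := by
    intro s hs; rw [Finset.mem_Icc] at hs
    exact get_ne_zero x hx (by omega)
  have hP : HasFDerivAt
      (fun y : Fin (2*m-1) → ℝ => ∏ s ∈ Finset.Icc k (m-1), get y (2*s) / get y (2*s-1))
      (∑ s ∈ Finset.Icc k (m-1),
        (∏ t ∈ (Finset.Icc k (m-1)).erase s, (get x (2*t) / get x (2*t-1))) • Phi x s) x :=
    HasFDerivAt.finset_prod (fun s hs => hasFDerivAt_factor x s (hden s hs))
  have hS : HasFDerivAt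
      (fun y : Fin (2*m-1) → ℝ => ∑ ℓ ∈ Finset.range (2*k-1), get y ℓ)
      (∑ ℓ ∈ Finset.range (2*k-1), (G ℓ : (Fin (2*m-1) → ℝ) →L[ℝ] ℝ)) x :=
    HasFDerivAt.fun_sum (fun ℓ _ => hasFDerivAt_get ℓ x)
  have hF : HasFDerivAt (Fodd m k)
      ((∑ ℓ ∈ Finset.range (2*k-1), get x ℓ) •
          (∑ s ∈ Finset.Icc k (m-1),
            (∏ t ∈ (Finset.Icc k (m-1)).erase s, (get x (2*t) / get x (2*t-1))) • Phi x s)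
        + (∏ s ∈ Finset.Icc k (m-1), get x (2*s) / get x (2*s-1)) •
          (∑ ℓ ∈ Finset.range (2*k-1), (G ℓ : (Fin (2*m-1) → ℝ) →L[ℝ] ℝ))) x :=
    hS.mul hP
  have hval : pd a (Fodd m k) x
      = (∑ ℓ ∈ Finset.range (2*k-1), get x ℓ) *
          ((∑ s ∈ Finset.Icc k (m-1),
            (∏ t ∈ (Finset.Icc k (m-1)).erase s, (get x (2*t) / get x (2*t-1))) • Phi x s)
              (Pi.single a (1:ℝ)))
        + (∏ s ∈ Finset.Icc k (m-1), get x (2*s) / get x (2*s-1)) *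
          ((∑ ℓ ∈ Finset.range (2*k-1), (G ℓ : (Fin (2*m-1) → ℝ) →L[ℝ] ℝ))
              (Pi.single a (1:ℝ))) := by
    show fderiv ℝ (Fodd m k) x (Pi.single a 1) = _
    rw [hF.fderiv]
    rw [ContinuousLinearMap.add_apply, ContinuousLinearMap.smul_apply,
      ContinuousLinearMap.smul_apply, smul_eq_mul, smul_eq_mul]
  have hSD : (∑ ℓ ∈ Finset.range (2*k-1), (G ℓ : (Fin (2*m-1) → ℝ) →L[ℝ] ℝ))
      (Pi.single a (1:ℝ)) = if (a:ℕ) < 2*k-1 then 1 else 0 := by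
    rw [ContinuousLinearMap.sum_apply]
    simp only [G_single]
    rw [Finset.sum_ite_eq' (Finset.range (2*k-1)) ((a:ℕ)) (fun _ => (1:ℝ))]
    simp [Finset.mem_range]
  have hPD := Pder_single m k hk1 hkm x hx a
  rw [hval, mul_add,
    show x a * ((∑ ℓ ∈ Finset.range (2*k-1), get x ℓ) *
        ((∑ s ∈ Finset.Icc k (m-1),
          (∏ t ∈ (Finset.Icc k (m-1)).erase s, (get x (2*t) / get x (2*t-1))) • Phi x s)
            (Pi.single a (1:ℝ))))
      = (∑ ℓ ∈ Finset.range (2*k-1), get x ℓ) *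
        (x a * ((∑ s ∈ Finset.Icc k (m-1),
          (∏ t ∈ (Finset.Icc k (m-1)).erase s, (get x (2*t) / get x (2*t-1))) • Phi x s)
            (Pi.single a (1:ℝ)))) from by ring,
    hPD, hSD]
  rw [W]
  split_ifs <;> (try (exfalso; omega)) <;> (try rw [get_coe]) <;> ring

end FoddAux

open FoddAux in
/-- For odd `n = 2m-1`, the functions `F_1, …, F_m` are pairwise in involution
with respect to the bracket `{x_i,x_j} = x_i x_j` (i<j). -/
theorem Fodd_involutive (m : ℕ) (hm : 1 ≤ m) (i j : ℕ)
    (hi1 : 1 ≤ i) (him : i ≤ m) (hj1 : 1 ≤ j) (hjm : j ≤ m)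
    (x : Fin (2*m-1) → ℝ) (hx : ∀ a, x a ≠ 0) :
    pb lv (Fodd m i) (Fodd m j) x = 0 := by
  classical
  set X : ℕ → ℝ := fun ℓ => get x ℓ with hX
  set Pi' : ℝ := ∏ s ∈ Finset.Icc i (m-1), get x (2*s) / get x (2*s-1) with hPi
  set Pj' : ℝ := ∏ s ∈ Finset.Icc j (m-1), get x (2*s) / get x (2*s-1) with hPj
  calc pb lv (Fodd m i) (Fodd m j) x
      = ∑ a : Fin (2*m-1), ∑ b : Fin (2*m-1),
          lv a b x * pd a (Fodd m i) x * pd b (Fodd m j) x := rfl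
    _ = ∑ a : Fin (2*m-1), ∑ b : Fin (2*m-1),
          (Pi' * Pj') * (sg (a:ℕ) (b:ℕ) * W X i (a:ℕ) * W X j (b:ℕ)) := by
        refine Finset.sum_congr rfl fun a _ => Finset.sum_congr rfl fun b _ => ?_
        have hlv : lv a b x = sg (a:ℕ) (b:ℕ) * (x a * x b) := by
          unfold lv sg
          split_ifs <;> (try (exfalso; omega)) <;> ring
        have hmi := xa_pd m i hi1 him x hx a
        have hmj := xa_pd m j hj1 hjm x hx b
        calc lv a b x * pd a (Fodd m i) x * pd b (Fodd m j) x
            = sg (a:ℕ) (b:ℕ) * (x a * pd a (Fodd m i) x) * (x b * pd b (Fodd m j) x) := by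
              rw [hlv]; ring
          _ = (Pi' * Pj') * (sg (a:ℕ) (b:ℕ) * W X i (a:ℕ) * W X j (b:ℕ)) := by
              rw [hmi, hmj]; ring
    _ = (Pi' * Pj') * ∑ a : Fin (2*m-1), ∑ b : Fin (2*m-1),
          sg (a:ℕ) (b:ℕ) * W X i (a:ℕ) * W X j (b:ℕ) := by
        rw [Finset.mul_sum]
        refine Finset.sum_congr rfl fun a _ => ?_
        rw [Finset.mul_sum]
    _ = (Pi' * Pj') * ∑ a ∈ Finset.range (2*m-1), ∑ b ∈ Finset.range (2*m-1),
          sg a b * W X i a * W X j b := by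
        congr 1
        have h1 : ∀ a : Fin (2*m-1),
            (∑ b : Fin (2*m-1), sg (a:ℕ) (b:ℕ) * W X i (a:ℕ) * W X j (b:ℕ))
              = ∑ b ∈ Finset.range (2*m-1), sg (a:ℕ) b * W X i (a:ℕ) * W X j b :=
          fun a => Fin.sum_univ_eq_sum_range
            (fun bn => sg (a:ℕ) bn * W X i (a:ℕ) * W X j bn) (2*m-1)
        rw [Finset.sum_congr rfl fun a _ => h1 a]
        exact Fin.sum_univ_eq_sum_range
          (fun an => ∑ b ∈ Finset.range (2*m-1), sg an b * W X i an * W X j b) (2*m-1)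
    _ = (Pi' * Pj') * 0 := by rw [key m i j hi1 him hj1 hjm X]
    _ = 0 := mul_zero _
end

section
/- For n = 2m even, the functions F_k = (Σ_{ℓ=1}^{2k} x_ℓ) ∏_{s=k}^{n/2-1} x_{2s+2}/x_{2s+1}, k = 1,...,m, satisfy {F_i, F_j} = 0 for all i, j with respect to the bracket {x_i,x_j} = x_i x_j (i<j). -/
/-- For `n = 2m` even, the integral
`F_k = (Σ_{ℓ=1}^{2k} x_ℓ) ∏_{s=k}^{n/2-1} x_{2s+2}/x_{2s+1}` (1-based indices). -/
noncomputable def Feven (m k : ℕ) : (Fin (2*m) → ℝ) → ℝ := fun x =>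
  (∑ ℓ ∈ Finset.range (2*k), get x ℓ) *
  ∏ s ∈ Finset.Icc k (m-1), get x (2*s+1) / get x (2*s)

open Finset


noncomputable def cc (k a : ℕ) : ℝ := if 2*k ≤ a then (if Odd a then 1 else -1) else 0

noncomputable def ww (X : ℕ → ℝ) (k a : ℕ) : ℝ :=
  (if a < 2*k then X a else 0) + (∑ ℓ ∈ range (2*k), X ℓ) * cc k a

lemma cc_sum (k b : ℕ) : ∑ a ∈ range b, cc k a = if Odd b ∧ 2*k < b then -1 else 0 := by
  induction b with
  | zero => simp
  | succ b ih =>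
    rw [Finset.sum_range_succ, ih]
    unfold cc
    simp only [Nat.odd_iff] at *
    split_ifs
    all_goals first
    | ring1
    | (exfalso; omega)

lemma ite_sum (X : ℕ → ℝ) (k b : ℕ) :
    ∑ a ∈ range b, (if a < 2*k then X a else 0) = ∑ a ∈ range (min b (2*k)), X a := by
  induction b with
  | zero => simp
  | succ b ih =>
    rw [Finset.sum_range_succ, ih]
    rcases Nat.lt_or_ge b (2*k) with h | h
    · rw [if_pos h, show min b (2*k) = b from by omega,
        show min (b+1) (2*k) = b+1 from by omega, Finset.sum_range_succ]
    · rw [if_neg (by omega), show min b (2*k) = 2*k from by omega,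
        show min (b+1) (2*k) = 2*k from by omega, add_zero]

lemma ww_sum (X : ℕ → ℝ) (k b : ℕ) :
    ∑ a ∈ range b, ww X k a =
      (∑ ℓ ∈ range (min b (2*k)), X ℓ) +
        (∑ ℓ ∈ range (2*k), X ℓ) * (if Odd b ∧ 2*k < b then -1 else 0) := by
  unfold ww
  rw [Finset.sum_add_distrib, ite_sum, ← Finset.mul_sum, cc_sum]

lemma sigma_sum (f g : ℕ → ℝ) (n : ℕ) :
    ∑ a ∈ range n, ∑ b ∈ range n,
        (if a < b then (1:ℝ) else if b < a then -1 else 0) * f a * g b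
      = ∑ b ∈ range n, (g b * ∑ a ∈ range b, f a - f b * ∑ a ∈ range b, g a) := by
  induction n with
  | zero => simp
  | succ n ih =>
    simp only [Finset.sum_range_succ]
    rw [Finset.sum_add_distrib, ih]
    have e1 : ∑ a ∈ range n, (if a < n then (1:ℝ) else if n < a then -1 else 0) * f a * g n
        = (∑ a ∈ range n, f a) * g n := by
      rw [Finset.sum_mul]
      refine Finset.sum_congr rfl fun a ha => ?_
      rw [if_pos (Finset.mem_range.mp ha)]; ring
    have e2 : ∑ b ∈ range n, (if n < b then (1:ℝ) else if b < n then -1 else 0) * f n * g b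
        = -(f n * ∑ b ∈ range n, g b) := by
      rw [Finset.mul_sum, ← Finset.sum_neg_distrib]
      refine Finset.sum_congr rfl fun b hb => ?_
      have hbn := Finset.mem_range.mp hb
      rw [if_neg (by omega), if_pos hbn]; ring
    rw [e1, e2, if_neg (lt_irrefl n)]
    rw [if_neg (lt_irrefl n)]
    ring

set_option maxHeartbeats 2000000 in
lemma key (X : ℕ → ℝ) (i j : ℕ) (hij : i ≤ j) (N : ℕ) :
    ∑ b ∈ range N, (ww X j b * ∑ a ∈ range b, ww X i a - ww X i b * ∑ a ∈ range b, ww X j a)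
      = if Odd N ∧ 2*i < N ∧ N ≤ 2*j then
          (∑ ℓ ∈ range (2*i), X ℓ) * ∑ ℓ ∈ range N, X ℓ else 0 := by
  induction N with
  | zero => simp
  | succ N ih =>
    rw [Finset.sum_range_succ, ih, ww_sum X i N, ww_sum X j N]
    unfold ww cc
    rw [Finset.sum_range_succ (f := fun ℓ => X ℓ) (n := N)]
    simp only [Nat.odd_iff]
    have hp := Nat.mod_two_eq_zero_or_one N
    rcases Nat.lt_or_ge N (2*i) with h1 | h1
    · rw [show min N (2*i) = N from by omega, show min N (2*j) = N from by omega]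
      rcases hp with hp | hp <;> split_ifs <;> (first | ring1 | (exfalso; omega))
    · rw [show min N (2*i) = 2*i from by omega]
      rcases Nat.lt_or_ge N (2*j) with h2 | h2
      · rw [show min N (2*j) = N from by omega]
        rcases hp with hp | hp <;> split_ifs <;> (first | ring1 | (exfalso; omega))
      · rw [show min N (2*j) = 2*j from by omega]
        rcases hp with hp | hp <;> split_ifs <;> (first | ring1 | (exfalso; omega))

noncomputable def pj (m ℓ : ℕ) : (Fin (2*m) → ℝ) →L[ℝ] ℝ :=
  if h : ℓ < 2*m then (ContinuousLinearMap.proj (R := ℝ) (φ := fun _ : Fin (2*m) => ℝ) ⟨ℓ, h⟩)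
  else 0

lemma pj_pos {m ℓ : ℕ} (h : ℓ < 2*m) :
    pj m ℓ = ContinuousLinearMap.proj (R := ℝ) (φ := fun _ : Fin (2*m) => ℝ) ⟨ℓ, h⟩ :=
  dif_pos h

lemma get_lt {m ℓ : ℕ} (h : ℓ < 2*m) (x : Fin (2*m) → ℝ) : get x ℓ = x ⟨ℓ, h⟩ := dif_pos h

noncomputable def dr (m : ℕ) (x : Fin (2*m) → ℝ) (s : ℕ) : (Fin (2*m) → ℝ) →L[ℝ] ℝ :=
  get x (2*s+1) • ((-(get x (2*s) ^ 2)⁻¹) • pj m (2*s)) + (get x (2*s))⁻¹ • pj m (2*s+1)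

lemma hasfd_get {m ℓ : ℕ} (h : ℓ < 2*m) (x : Fin (2*m) → ℝ) :
    HasFDerivAt (fun y => get y ℓ) (pj m ℓ) x := by
  have : (fun y : Fin (2*m) → ℝ => get y ℓ) = fun y => y ⟨ℓ, h⟩ :=
    funext fun y => dif_pos h
  rw [this, pj_pos h]
  exact (ContinuousLinearMap.proj (R := ℝ) (φ := fun _ : Fin (2*m) => ℝ) ⟨ℓ, h⟩).hasFDerivAt

lemma hasfd_ratio {m s : ℕ} (h1 : 2*s+1 < 2*m) (x : Fin (2*m) → ℝ) (hx : ∀ a, x a ≠ 0) :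
    HasFDerivAt (fun y => get y (2*s+1) / get y (2*s)) (dr m x s) x := by
  have h0 : 2*s < 2*m := by omega
  have ho : (fun y : Fin (2*m) → ℝ => get y (2*s+1) / get y (2*s))
      = fun y => y ⟨2*s+1, h1⟩ * (y ⟨2*s, h0⟩)⁻¹ := by
    funext y
    rw [get_lt h1, get_lt h0, div_eq_mul_inv]
  rw [ho]
  have he : HasFDerivAt (fun y : Fin (2*m) → ℝ => (y ⟨2*s, h0⟩)⁻¹)
      ((-(x ⟨2*s, h0⟩ ^ 2)⁻¹) •
        (ContinuousLinearMap.proj (R := ℝ) (φ := fun _ : Fin (2*m) => ℝ) ⟨2*s, h0⟩)) x :=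
    (hasDerivAt_inv (hx _)).comp_hasFDerivAt x (ContinuousLinearMap.proj (R := ℝ) (φ := fun _ : Fin (2*m) => ℝ) ⟨2*s, h0⟩).hasFDerivAt
  have hmul := ((ContinuousLinearMap.proj (R := ℝ)
      (φ := fun _ : Fin (2*m) => ℝ) ⟨2*s+1, h1⟩).hasFDerivAt (x := x)).mul he
  rw [dr, pj_pos h0, pj_pos h1, get_lt h1, get_lt h0]
  exact hmul

lemma hasfd_Feven (m k : ℕ) (hm : 1 ≤ m) (hkm : k ≤ m) (x : Fin (2*m) → ℝ)
    (hx : ∀ a, x a ≠ 0) :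
    HasFDerivAt (Feven m k)
      ((∑ ℓ ∈ range (2*k), get x ℓ) •
          (∑ s ∈ Icc k (m-1),
            (∏ t ∈ (Icc k (m-1)).erase s, (get x (2*t+1) / get x (2*t))) • dr m x s)
        + (∏ s ∈ Icc k (m-1), get x (2*s+1) / get x (2*s)) •
            (∑ ℓ ∈ range (2*k), pj m ℓ)) x := by
  have hA : HasFDerivAt (fun y : Fin (2*m) → ℝ => ∑ ℓ ∈ range (2*k), get y ℓ)
      (∑ ℓ ∈ range (2*k), pj m ℓ) x := by
    refine HasFDerivAt.fun_sum fun ℓ hℓ => ?_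
    exact hasfd_get (by have := Finset.mem_range.mp hℓ; omega) x
  have hB : HasFDerivAt (fun y : Fin (2*m) → ℝ => ∏ s ∈ Icc k (m-1),
        get y (2*s+1) / get y (2*s))
      (∑ s ∈ Icc k (m-1),
        (∏ t ∈ (Icc k (m-1)).erase s, (get x (2*t+1) / get x (2*t))) • dr m x s) x := by
    exact HasFDerivAt.finset_prod fun s hs => by
      have hs' := Finset.mem_Icc.mp hs
      exact hasfd_ratio (by omega) x hx
  exact hA.mul hB

lemma ev_pj {m ℓ : ℕ} (h : ℓ < 2*m) (a : Fin (2*m)) :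
    pj m ℓ (Pi.single a 1) = if ℓ = (a:ℕ) then 1 else 0 := by
  rw [pj_pos h]
  simp [Pi.single_apply, Fin.ext_iff, eq_comm]

lemma deriv_eval (m k : ℕ) (hm : 1 ≤ m) (hkm : k ≤ m) (x : Fin (2*m) → ℝ)
    (hx : ∀ a, x a ≠ 0) (a : Fin (2*m)) :
    x a * pd a (Feven m k) x
      = (∏ s ∈ Icc k (m-1), get x (2*s+1) / get x (2*s)) * ww (get x) k (a:ℕ) := by
  have hxa : get x (a:ℕ) = x a := by
    rw [get_lt a.isLt]
  have hgx : ∀ ℓ, ℓ < 2*m → get x ℓ ≠ 0 := fun ℓ h => by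
    rw [get_lt h]; exact hx _
  rw [pd, (hasfd_Feven m k hm hkm x hx).fderiv]
  simp only [ContinuousLinearMap.add_apply, ContinuousLinearMap.smul_apply,
    ContinuousLinearMap.coe_sum', Finset.sum_apply, smul_eq_mul]
  have evS : ∑ ℓ ∈ range (2*k), pj m ℓ (Pi.single a 1)
      = if (a:ℕ) < 2*k then 1 else 0 := by
    rw [Finset.sum_congr rfl (fun ℓ hℓ => ev_pj (by
      have := Finset.mem_range.mp hℓ; omega) a)]
    rw [Finset.sum_ite_eq' (range (2*k)) (a:ℕ) (fun _ => (1:ℝ))]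
    simp [Finset.mem_range]
  rw [evS]
  have evdr : ∀ s ∈ Icc k (m-1), dr m x s (Pi.single a 1)
      = get x (2*s+1) * (-(get x (2*s) ^ 2)⁻¹ * (if 2*s = (a:ℕ) then 1 else 0))
        + (get x (2*s))⁻¹ * (if 2*s+1 = (a:ℕ) then 1 else 0) := by
    intro s hs
    have hs' := Finset.mem_Icc.mp hs
    have h1 : 2*s+1 < 2*m := by omega
    simp only [dr, ContinuousLinearMap.add_apply, ContinuousLinearMap.smul_apply,
      smul_eq_mul, ev_pj (show 2*s < 2*m by omega) a, ev_pj h1 a]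
  rcases Nat.lt_or_ge (a:ℕ) (2*k) with hc | hc
  · have hz : ∑ s ∈ Icc k (m-1),
        (∏ t ∈ (Icc k (m-1)).erase s, (get x (2*t+1) / get x (2*t))) *
          dr m x s (Pi.single a 1) = 0 := by
      refine Finset.sum_eq_zero fun s hs => ?_
      have hs' := Finset.mem_Icc.mp hs
      rw [evdr s hs, if_neg (by omega), if_neg (by omega)]
      ring
    rw [hz, ww, cc, if_pos hc, if_pos hc, if_neg (show ¬ 2*k ≤ (a:ℕ) from by omega), hxa]
    ring
  · have hav := a.isLt
    rcases Nat.even_or_odd (a:ℕ) with hp | hp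
    · -- even: a = 2*s₀
      have hp' := hp
      rw [Nat.even_iff] at hp'
      obtain ⟨s₀, hs₀⟩ : ∃ s₀, (a:ℕ) = 2*s₀ := ⟨(a:ℕ)/2, by omega⟩
      have hmem : s₀ ∈ Icc k (m-1) := Finset.mem_Icc.mpr ⟨by omega, by omega⟩
      have hone : ∑ s ∈ Icc k (m-1),
          (∏ t ∈ (Icc k (m-1)).erase s, (get x (2*t+1) / get x (2*t))) *
            dr m x s (Pi.single a 1)
          = (∏ t ∈ (Icc k (m-1)).erase s₀, (get x (2*t+1) / get x (2*t))) *
              (get x (2*s₀+1) * (-(get x (2*s₀) ^ 2)⁻¹)) := by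
        rw [Finset.sum_eq_single_of_mem s₀ hmem]
        · rw [evdr s₀ hmem, if_pos (by omega), if_neg (by omega)]
          ring
        · intro t ht hne
          rw [evdr t ht, if_neg (by omega), if_neg (by omega)]
          ring
      rw [hone, ww, cc, if_neg (show ¬ (a:ℕ) < 2*k from by omega),
        if_neg (show ¬ (a:ℕ) < 2*k from by omega), if_pos hc,
        if_neg (show ¬ Odd (a:ℕ) from by rw [Nat.odd_iff]; omega)]
      have hprod : (∏ t ∈ Icc k (m-1), get x (2*t+1) / get x (2*t))
          = (get x (2*s₀+1) / get x (2*s₀)) *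
              ∏ t ∈ (Icc k (m-1)).erase s₀, (get x (2*t+1) / get x (2*t)) :=
        (Finset.mul_prod_erase _ _ hmem).symm
      rw [hprod]
      have hxz : get x (2*s₀) ≠ 0 := hgx _ (by omega)
      have hxa2 : x a = get x (2*s₀) := by rw [← hs₀, hxa]
      rw [hxa2]
      set E := ∏ t ∈ (Icc k (m-1)).erase s₀, (get x (2*t+1) / get x (2*t)) with hE
      field_simp
      ring
    · have hp' := hp
      rw [Nat.odd_iff] at hp'
      obtain ⟨s₀, hs₀⟩ : ∃ s₀, (a:ℕ) = 2*s₀+1 := ⟨(a:ℕ)/2, by omega⟩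
      have hmem : s₀ ∈ Icc k (m-1) := Finset.mem_Icc.mpr ⟨by omega, by omega⟩
      have hone : ∑ s ∈ Icc k (m-1),
          (∏ t ∈ (Icc k (m-1)).erase s, (get x (2*t+1) / get x (2*t))) *
            dr m x s (Pi.single a 1)
          = (∏ t ∈ (Icc k (m-1)).erase s₀, (get x (2*t+1) / get x (2*t))) *
              (get x (2*s₀))⁻¹ := by
        rw [Finset.sum_eq_single_of_mem s₀ hmem]
        · rw [evdr s₀ hmem, if_neg (by omega), if_pos (by omega)]
          ring
        · intro t ht hne
          rw [evdr t ht, if_neg (by omega), if_neg (by omega)]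
          ring
      rw [hone, ww, cc, if_neg (show ¬ (a:ℕ) < 2*k from by omega),
        if_neg (show ¬ (a:ℕ) < 2*k from by omega), if_pos hc, if_pos hp]
      have hprod : (∏ t ∈ Icc k (m-1), get x (2*t+1) / get x (2*t))
          = (get x (2*s₀+1) / get x (2*s₀)) *
              ∏ t ∈ (Icc k (m-1)).erase s₀, (get x (2*t+1) / get x (2*t)) :=
        (Finset.mul_prod_erase _ _ hmem).symm
      rw [hprod]
      have hxz : get x (2*s₀) ≠ 0 := hgx _ (by omega)
      have hxa2 : x a = get x (2*s₀+1) := by rw [← hs₀, hxa]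
      rw [hxa2]
      set E := ∏ t ∈ (Icc k (m-1)).erase s₀, (get x (2*t+1) / get x (2*t)) with hE
      field_simp
      ring

lemma pb_swap {n : ℕ} (f g : (Fin n → ℝ) → ℝ) (x : Fin n → ℝ) :
    pb lv f g x = - pb lv g f x := by
  have lv_anti : ∀ (p q : Fin n), lv p q x = - lv q p x := by
    intro p q
    simp only [lv]
    split_ifs
    all_goals first
    | ring1
    | (exfalso; omega)
  rw [pb, pb, Finset.sum_comm, ← Finset.sum_neg_distrib]
  refine Finset.sum_congr rfl fun a _ => ?_
  rw [← Finset.sum_neg_distrib]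
  refine Finset.sum_congr rfl fun b _ => ?_
  rw [lv_anti b a]
  ring

lemma main_le (m : ℕ) (hm : 1 ≤ m) (i j : ℕ)
    (hi1 : 1 ≤ i) (him : i ≤ m) (hj1 : 1 ≤ j) (hjm : j ≤ m) (hij : i ≤ j)
    (x : Fin (2*m) → ℝ) (hx : ∀ a, x a ≠ 0) :
    pb lv (Feven m i) (Feven m j) x = 0 := by
  set Pi' := ∏ s ∈ Icc i (m-1), get x (2*s+1) / get x (2*s) with hPi
  set Pj' := ∏ s ∈ Icc j (m-1), get x (2*s+1) / get x (2*s) with hPj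
  have hterm : ∀ a b : Fin (2*m),
      lv a b x * pd a (Feven m i) x * pd b (Feven m j) x
      = (Pi' * Pj') *
        ((if (a:ℕ) < (b:ℕ) then (1:ℝ) else if (b:ℕ) < (a:ℕ) then -1 else 0) *
          ww (get x) i (a:ℕ) * ww (get x) j (b:ℕ)) := by
    intro a b
    have ha := deriv_eval m i hm him x hx a
    have hb := deriv_eval m j hm hjm x hx b
    have hlv : lv a b x = (if (a:ℕ) < (b:ℕ) then (1:ℝ) else if (b:ℕ) < (a:ℕ) then -1 else 0)
        * (x a * x b) := by
      simp only [lv]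
      split_ifs
      all_goals first
      | ring1
      | (exfalso; omega)
    rw [hlv]
    have : (if (a:ℕ) < (b:ℕ) then (1:ℝ) else if (b:ℕ) < (a:ℕ) then -1 else 0)
          * (x a * x b) * pd a (Feven m i) x * pd b (Feven m j) x
        = (if (a:ℕ) < (b:ℕ) then (1:ℝ) else if (b:ℕ) < (a:ℕ) then -1 else 0)
          * ((x a * pd a (Feven m i) x) * (x b * pd b (Feven m j) x)) := by ring
    rw [this, ha, hb]
    ring
  rw [pb, Finset.sum_congr rfl (fun a _ => Finset.sum_congr rfl (fun b _ => hterm a b))]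
  simp only [← Finset.mul_sum]
  have hsum : ∑ a : Fin (2*m), ∑ b : Fin (2*m),
      (if (a:ℕ) < (b:ℕ) then (1:ℝ) else if (b:ℕ) < (a:ℕ) then -1 else 0) *
        ww (get x) i (a:ℕ) * ww (get x) j (b:ℕ) = 0 := by
    have conv1 : ∀ a : Fin (2*m), (∑ b : Fin (2*m),
        (if (a:ℕ) < (b:ℕ) then (1:ℝ) else if (b:ℕ) < (a:ℕ) then -1 else 0) *
          ww (get x) i (a:ℕ) * ww (get x) j (b:ℕ))
        = ∑ q ∈ range (2*m),
            (if (a:ℕ) < q then (1:ℝ) else if q < (a:ℕ) then -1 else 0) *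
              ww (get x) i (a:ℕ) * ww (get x) j q :=
      fun a => Fin.sum_univ_eq_sum_range
        (fun q => (if (a:ℕ) < q then (1:ℝ) else if q < (a:ℕ) then -1 else 0) *
          ww (get x) i (a:ℕ) * ww (get x) j q) (2*m)
    rw [Finset.sum_congr rfl (fun a _ => conv1 a)]
    rw [Fin.sum_univ_eq_sum_range
      (fun p => ∑ q ∈ range (2*m),
        (if p < q then (1:ℝ) else if q < p then -1 else 0) *
          ww (get x) i p * ww (get x) j q) (2*m)]
    rw [sigma_sum (fun p => ww (get x) i p) (fun q => ww (get x) j q) (2*m)]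
    rw [key (get x) i j hij (2*m)]
    rw [if_neg]
    rintro ⟨h1, h2⟩
    rw [Nat.odd_iff] at h1
    omega
  rw [hsum, mul_zero]

/-- For even `n = 2m`, the functions `F_1, …, F_m` are pairwise in involution with
respect to the bracket `{x_i,x_j} = x_i x_j` (i<j). -/
theorem Feven_involutive (m : ℕ) (hm : 1 ≤ m) (i j : ℕ)
    (hi1 : 1 ≤ i) (him : i ≤ m) (hj1 : 1 ≤ j) (hjm : j ≤ m)
    (x : Fin (2*m) → ℝ) (hx : ∀ a, x a ≠ 0) :
    pb lv (Feven m i) (Feven m j) x = 0 := by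
  rcases le_total i j with hij | hij
  · exact main_le m hm i j hi1 him hj1 hjm hij x hx
  · rw [pb_swap, main_le m hm j i hj1 hjm hi1 him hij x hx, neg_zero]
end

section
/- For n = 2m even, with F_k and G_k = ι(F_k) (ι(x_i) = x_{n+1-i}), the brackets are {F_i, G_j} = −F_i G_j if i+j < m+1 and {F_i, G_j} = −F_{m-j} G_{m-i} if i+j ≥ m+1, for 1 ≤ i, j < m. -/
/-- `G_k = ι(F_k)` where `ι(x_i) = x_{n+1-i}`. -/
noncomputable def Geven (m k : ℕ) : (Fin (2*m) → ℝ) → ℝ := fun x =>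
  Feven m k (fun i => x i.rev)

open Finset

namespace FGaux

noncomputable def sg (a b : ℕ) : ℝ := if a < b then 1 else if b < a then -1 else 0

noncomputable def eps (a : ℕ) : ℝ := if a % 2 = 1 then 1 else -1

lemma sum_eps (p : ℕ) : ∑ a ∈ range p, eps a = if p % 2 = 1 then -1 else 0 := by
  induction p with
  | zero => simp
  | succ q ih =>
    rw [Finset.sum_range_succ, ih]
    rcases Nat.mod_two_eq_zero_or_one q with h | h
    · have h2 : (q+1) % 2 = 1 := by omega
      simp [eps, h, h2]
    · have h2 : (q+1) % 2 = 0 := by omega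
      simp [eps, h, h2]

lemma double_reduce (n : ℕ) (u v : ℕ → ℝ) :
    ∑ a ∈ range n, ∑ b ∈ range n, sg a b * u a * v b
    = ∑ b ∈ range n, (2 * (∑ a ∈ range b, u a) + u b - ∑ a ∈ range n, u a) * v b := by
  rw [Finset.sum_comm]
  refine Finset.sum_congr rfl fun b hb => ?_
  rw [Finset.mem_range] at hb
  have key : ∑ a ∈ range n, sg a b * u a
      = 2 * (∑ a ∈ range b, u a) + u b - ∑ a ∈ range n, u a := by
    have hsplit : ∑ a ∈ range n, sg a b * u a
        = (∑ a ∈ Ico 0 b, sg a b * u a) + ∑ a ∈ Ico b n, sg a b * u a := by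
      rw [Finset.sum_Ico_consecutive _ (Nat.zero_le b) hb.le, ← Finset.range_eq_Ico]
    have h1 : ∑ a ∈ Ico 0 b, sg a b * u a = ∑ a ∈ range b, u a := by
      rw [← Finset.range_eq_Ico]
      refine Finset.sum_congr rfl fun a ha => ?_
      rw [Finset.mem_range] at ha
      simp [sg, ha]
    have h2 : ∑ a ∈ Ico b n, sg a b * u a = -(∑ a ∈ Ico (b+1) n, u a) := by
      rw [Finset.sum_eq_sum_Ico_succ_bot hb]
      have : ∀ a ∈ Ico (b+1) n, sg a b * u a = -u a := by
        intro a ha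
        rw [Finset.mem_Ico] at ha
        have : ¬ a < b := by omega
        have h3 : b < a := by omega
        simp [sg, this, h3]
      rw [Finset.sum_congr rfl this]
      simp [sg]
    have h4 : ∑ a ∈ Ico (b+1) n, u a = (∑ a ∈ range n, u a) - (∑ a ∈ range b, u a) - u b := by
      have e1 : (∑ a ∈ range b, u a) + ∑ a ∈ Ico b n, u a = ∑ a ∈ range n, u a :=
        Finset.sum_range_add_sum_Ico _ hb.le
      have e2 : ∑ a ∈ Ico b n, u a = u b + ∑ a ∈ Ico (b+1) n, u a :=
        Finset.sum_eq_sum_Ico_succ_bot hb _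
      linarith [e1, e2]
    rw [hsplit, h1, h2, h4]; ring
  rw [← Finset.sum_mul, key]

lemma sum_telesq (y : ℕ → ℝ) (q : ℕ) :
    ∑ b ∈ range q, y b * (2 * (∑ a ∈ range b, y a) + y b)
      = (∑ a ∈ range q, y a)^2 := by
  induction q with
  | zero => simp
  | succ p ih =>
    rw [Finset.sum_range_succ, ih, Finset.sum_range_succ (f := y)]
    ring

lemma sum_alt (y : ℕ → ℝ) (q : ℕ) :
    ∑ b ∈ range (2*q), eps b * (2 * (∑ a ∈ range b, y a) + y b)
      = ∑ a ∈ range (2*q), y a := by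
  induction q with
  | zero => simp
  | succ p ih =>
    have h1 : 2*(p+1) = (2*p+1)+1 := by ring
    have he : eps (2*p) = -1 := by simp [eps, Nat.mul_mod_right]
    have ho : eps (2*p+1) = 1 := by
      have : (2*p+1) % 2 = 1 := by omega
      simp [eps, this]
    rw [h1]
    rw [Finset.sum_range_succ (fun b => eps b * (2*(∑ a ∈ range b, y a) + y b)) (2*p+1)]
    rw [Finset.sum_range_succ (fun b => eps b * (2*(∑ a ∈ range b, y a) + y b)) (2*p)]
    rw [ih, he, ho]
    rw [Finset.sum_range_succ y (2*p+1), Finset.sum_range_succ y (2*p)]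
    ring




noncomputable def cproj (m : ℕ) (ℓ : ℕ) : ((Fin (2*m) → ℝ) →L[ℝ] ℝ) :=
  if h : ℓ < 2*m then ContinuousLinearMap.proj ⟨ℓ, h⟩ else 0

lemma hasFDerivAt_get (m ℓ : ℕ) (x : Fin (2*m) → ℝ) :
    HasFDerivAt (fun y : Fin (2*m) → ℝ => get y ℓ) (cproj m ℓ) x := by
  by_cases h : ℓ < 2*m
  · have he : (fun y : Fin (2*m) → ℝ => get y ℓ) = fun y => y ⟨ℓ, h⟩ := by
      funext y; simp [_root_.get, h]
    rw [he, cproj, dif_pos h]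
    exact (ContinuousLinearMap.proj (R := ℝ) (φ := fun _ : Fin (2*m) => ℝ) ⟨ℓ,h⟩).hasFDerivAt
  · have he : (fun y : Fin (2*m) → ℝ => get y ℓ) = fun _ => (0:ℝ) := by
      funext y; simp [_root_.get, h]
    rw [he, cproj, dif_neg h]
    exact hasFDerivAt_const 0 x

lemma cproj_single {m : ℕ} (ℓ : ℕ) (a : Fin (2*m)) :
    cproj m ℓ (Pi.single a 1) = if ℓ = (a:ℕ) then 1 else 0 := by
  by_cases h : ℓ < 2*m
  · rw [cproj, dif_pos h]
    rw [ContinuousLinearMap.proj_apply, Pi.single_apply]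
    congr 1
    simp [Fin.ext_iff]
  · rw [cproj, dif_neg h]
    have : ℓ ≠ (a:ℕ) := by have := a.isLt; omega
    simp [this]

/-- main analytic lemma -/
lemma pd_Feven (m k : ℕ) (hm : 1 ≤ m) (hk : k ≤ m) (x : Fin (2*m) → ℝ) (hx : ∀ c, x c ≠ 0) :
    DifferentiableAt ℝ (Feven m k) x ∧
    ∀ a : Fin (2*m), x a * pd a (Feven m k) x =
      (if (a:ℕ) < 2*k then x a * ∏ s ∈ Icc k (m-1), get x (2*s+1) / get x (2*s) else 0)
      + (if 2*k ≤ (a:ℕ) then eps (a:ℕ) * Feven m k x else 0) := by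
  have hget : ∀ (c : ℕ) (hc : c < 2*m), get x c = x ⟨c,hc⟩ := by
    intro c hc; simp [_root_.get, hc]
  have hgetne : ∀ c, c < 2*m → get x c ≠ 0 := by
    intro c hc; rw [hget c hc]; exact hx _
  set S : (Fin (2*m) → ℝ) → ℝ := fun y => ∑ ℓ ∈ Finset.range (2*k), get y ℓ with hS_def
  set q : ℕ → (Fin (2*m) → ℝ) → ℝ := fun s y => get y (2*s+1) * (get y (2*s))⁻¹ with hq_def
  set P : (Fin (2*m) → ℝ) → ℝ := fun y => ∏ s ∈ Icc k (m-1), q s y with hP_def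
  have hFeq : Feven m k = fun y => S y * P y := by
    funext y; simp [Feven, hS_def, hP_def, hq_def, div_eq_mul_inv]
  -- derivatives
  set S' : (Fin (2*m) → ℝ) →L[ℝ] ℝ := ∑ ℓ ∈ Finset.range (2*k), cproj m ℓ with hS'_def
  have hS : HasFDerivAt S S' x := HasFDerivAt.fun_sum fun ℓ _ => hasFDerivAt_get m ℓ x
  set D : ℕ → ((Fin (2*m) → ℝ) →L[ℝ] ℝ) := fun s =>
    get x (2*s+1) • ((-(ContinuousLinearMap.mulLeftRight ℝ ℝ (get x (2*s))⁻¹ (get x (2*s))⁻¹)).comp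
        (cproj m (2*s)))
      + (get x (2*s))⁻¹ • cproj m (2*s+1) with hD_def
  have hsm : ∀ s, s ∈ Icc k (m-1) → 2*s < 2*m ∧ 2*s+1 < 2*m := by
    intro s hs
    rw [mem_Icc] at hs
    omega
  have hq : ∀ s ∈ Icc k (m-1), HasFDerivAt (q s) (D s) x := by
    intro s hs
    have hinv : HasFDerivAt (fun y : Fin (2*m) → ℝ => (get y (2*s))⁻¹)
        ((-(ContinuousLinearMap.mulLeftRight ℝ ℝ (get x (2*s))⁻¹ (get x (2*s))⁻¹)).comp
          (cproj m (2*s))) x :=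
      (hasFDerivAt_inv' (hgetne _ (hsm s hs).1)).comp x (hasFDerivAt_get m (2*s) x)
    exact (hasFDerivAt_get m (2*s+1) x).mul hinv
  have hP : HasFDerivAt P (∑ s ∈ Icc k (m-1), (∏ u ∈ (Icc k (m-1)).erase s, q u x) • D s) x :=
    HasFDerivAt.finset_prod hq
  set P' : (Fin (2*m) → ℝ) →L[ℝ] ℝ :=
    ∑ s ∈ Icc k (m-1), (∏ u ∈ (Icc k (m-1)).erase s, q u x) • D s with hP'_def
  have hF : HasFDerivAt (Feven m k) (S x • P' + P x • S') x := by
    rw [hFeq]; exact hS.mul hP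
  constructor
  · exact hFeq ▸ hF.differentiableAt
  intro a
  have hpd : pd a (Feven m k) x = S x * P' (Pi.single a 1) + P x * S' (Pi.single a 1) := by
    rw [pd, hF.fderiv]; simp
  -- evaluate S'
  have hS'v : S' (Pi.single a 1) = if (a:ℕ) < 2*k then 1 else 0 := by
    rw [hS'_def, ContinuousLinearMap.sum_apply]
    rw [Finset.sum_congr rfl (fun ℓ _ => cproj_single ℓ a)]
    rw [Finset.sum_ite_eq' (Finset.range (2*k)) (a:ℕ) (fun _ => (1:ℝ))]
    simp [Finset.mem_range]
  -- evaluate D s on single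
  have hDv : ∀ s, D s (Pi.single a 1)
      = (if 2*s+1 = (a:ℕ) then (get x (2*s))⁻¹ else 0)
        - (if 2*s = (a:ℕ) then get x (2*s+1) * ((get x (2*s))⁻¹)^2 else 0) := by
    intro s
    rw [hD_def]
    simp only [ContinuousLinearMap.add_apply, ContinuousLinearMap.smul_apply,
      ContinuousLinearMap.comp_apply, ContinuousLinearMap.neg_apply,
      ContinuousLinearMap.mulLeftRight_apply, cproj_single, smul_eq_mul]
    by_cases h1 : 2*s = (a:ℕ) <;> by_cases h2 : 2*s+1 = (a:ℕ)
    · exact absurd h2 (by omega)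
    · simp only [if_pos h1, if_neg h2]; ring
    · simp only [if_neg h1, if_pos h2]; ring
    · simp only [if_neg h1, if_neg h2]; ring
  have hqx : ∀ s, q s x = get x (2*s+1) * (get x (2*s))⁻¹ := fun s => rfl
  have hPx : P x = ∏ s ∈ Icc k (m-1), get x (2*s+1) / get x (2*s) := by
    rw [hP_def]
    exact Finset.prod_congr rfl fun s _ => by rw [hqx s, div_eq_mul_inv]
  have hFx : Feven m k x = S x * P x := by rw [hFeq]
  rw [hpd, hS'v, hP'_def, ContinuousLinearMap.sum_apply]
  simp only [ContinuousLinearMap.smul_apply, smul_eq_mul]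
  rcases lt_or_ge (a:ℕ) (2*k) with hak | hak
  · -- a < 2k: derivative of product part vanishes
    have hz : ∀ s ∈ Icc k (m-1), (∏ u ∈ (Icc k (m-1)).erase s, q u x) * D s (Pi.single a 1) = 0 := by
      intro s hs
      rw [mem_Icc] at hs
      have h1 : 2*s ≠ (a:ℕ) := by omega
      have h2 : 2*s+1 ≠ (a:ℕ) := by omega
      rw [hDv s, if_neg h2, if_neg h1]
      ring
    rw [Finset.sum_congr rfl hz, Finset.sum_const_zero]
    have hno : ¬ (2*k ≤ (a:ℕ)) := by omega
    rw [if_pos hak, if_neg hno, if_pos hak, ← hPx]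
    ring
  · -- 2k ≤ a
    have haLt := a.isLt
    have hno : ¬ ((a:ℕ) < 2*k) := by omega
    rw [if_neg hno, if_neg hno, if_pos hak]
    rcases Nat.even_or_odd (a:ℕ) with ⟨t, ht⟩ | ⟨t, ht⟩
    · -- a = 2t even
      have h2t : 2*t = (a:ℕ) := by omega
      have hmem : t ∈ Icc k (m-1) := by rw [mem_Icc]; omega
      have hprod : (∏ u ∈ (Icc k (m-1)).erase t, q u x) * q t x = P x :=
        Finset.prod_erase_mul _ _ hmem
      have hxa : get x (2*t) = x a := by
        rw [hget _ (hsm t hmem).1]; congr 1; exact Fin.ext h2t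
      have hz : ∀ s ∈ Icc k (m-1), s ≠ t →
          (∏ u ∈ (Icc k (m-1)).erase s, q u x) * D s (Pi.single a 1) = 0 := by
        intro s hs hne
        have h1 : 2*s ≠ (a:ℕ) := by omega
        have h2 : 2*s+1 ≠ (a:ℕ) := by omega
        rw [hDv s, if_neg h2, if_neg h1]
        ring
      have hSig : (∑ s ∈ Icc k (m-1), (∏ u ∈ (Icc k (m-1)).erase s, q u x) * D s (Pi.single a 1))
          = -(P x) * (x a)⁻¹ := by
        rw [Finset.sum_eq_single t hz (fun h => absurd hmem h), hDv t,
          if_neg (by omega), if_pos h2t, ← hprod, hqx t, hxa]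
        ring
      have hpar : (a:ℕ) % 2 = 0 := by omega
      rw [hSig, hFx, eps, if_neg (by omega)]
      field_simp [hx a]
      try ring
    · -- a = 2t+1 odd
      have h2t : 2*t+1 = (a:ℕ) := by omega
      have hmem : t ∈ Icc k (m-1) := by rw [mem_Icc]; omega
      have hprod : (∏ u ∈ (Icc k (m-1)).erase t, q u x) * q t x = P x :=
        Finset.prod_erase_mul _ _ hmem
      have hxa : get x (2*t+1) = x a := by
        rw [hget _ (hsm t hmem).2]; congr 1; exact Fin.ext h2t
      have hxt0 : get x (2*t) ≠ 0 := hgetne _ (hsm t hmem).1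
      have hz : ∀ s ∈ Icc k (m-1), s ≠ t →
          (∏ u ∈ (Icc k (m-1)).erase s, q u x) * D s (Pi.single a 1) = 0 := by
        intro s hs hne
        have h1 : 2*s ≠ (a:ℕ) := by omega
        have h2 : 2*s+1 ≠ (a:ℕ) := by omega
        rw [hDv s, if_neg h2, if_neg h1]
        ring
      have hSig : (∑ s ∈ Icc k (m-1), (∏ u ∈ (Icc k (m-1)).erase s, q u x) * D s (Pi.single a 1))
          = P x * (x a)⁻¹ := by
        rw [Finset.sum_eq_single t hz (fun h => absurd hmem h), hDv t,
          if_pos h2t, if_neg (by omega), ← hprod, hqx t, hxa]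
        field_simp [hx a, hxt0]
        try ring
      have hpar : (a:ℕ) % 2 = 1 := by omega
      rw [hSig, hFx, eps, if_pos hpar]
      field_simp [hx a]
      try ring


noncomputable def Lrev (m : ℕ) : (Fin (2*m) → ℝ) →L[ℝ] (Fin (2*m) → ℝ) :=
  ContinuousLinearMap.pi (fun i => ContinuousLinearMap.proj i.rev)

lemma Lrev_apply (m : ℕ) (x : Fin (2*m) → ℝ) (i : Fin (2*m)) : Lrev m x i = x i.rev := rfl

lemma Lrev_single (m : ℕ) (b : Fin (2*m)) :
    Lrev m (Pi.single b 1) = Pi.single b.rev (1:ℝ) := by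
  funext c
  rw [Lrev_apply, Pi.single_apply, Pi.single_apply]
  by_cases h : c = b.rev
  · subst h; simp [Fin.rev_rev]
  · have h2 : c.rev ≠ b := fun hc => h (by rw [← hc, Fin.rev_rev])
    simp [h, h2]

lemma pd_Geven (m k : ℕ) (hm : 1 ≤ m) (hk : k ≤ m) (x : Fin (2*m) → ℝ) (hx : ∀ c, x c ≠ 0) :
    DifferentiableAt ℝ (Geven m k) x ∧
    ∀ b : Fin (2*m), x b * pd b (Geven m k) x =
      (if 2*m - 2*k ≤ (b:ℕ) then
        x b * ∏ s ∈ Icc k (m-1),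
          get (fun c : Fin (2*m) => x c.rev) (2*s+1) / get (fun c : Fin (2*m) => x c.rev) (2*s)
       else 0)
      + (if (b:ℕ) < 2*m - 2*k then -(eps (b:ℕ)) * Geven m k x else 0) := by
  have hx' : ∀ c, (Lrev m x) c ≠ 0 := fun c => hx c.rev
  obtain ⟨hdiff, hval⟩ := pd_Feven m k hm hk (Lrev m x) hx'
  have hG : Geven m k = fun y => Feven m k (Lrev m y) := rfl
  have hdG : DifferentiableAt ℝ (Geven m k) x := by
    rw [hG]
    exact hdiff.comp x ((Lrev m).differentiableAt)
  refine ⟨hdG, fun b => ?_⟩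
  have hcomp : fderiv ℝ (Geven m k) x = (fderiv ℝ (Feven m k) (Lrev m x)).comp (Lrev m) := by
    rw [hG]
    have h1 : fderiv ℝ (Feven m k ∘ Lrev m) x
        = (fderiv ℝ (Feven m k) (Lrev m x)).comp (fderiv ℝ (Lrev m) x) :=
      fderiv_comp x hdiff ((Lrev m).differentiableAt)
    rw [(Lrev m).fderiv] at h1
    exact h1
  have hpd : pd b (Geven m k) x = pd b.rev (Feven m k) (Lrev m x) := by
    rw [pd, pd, hcomp, ContinuousLinearMap.comp_apply, Lrev_single]
  have hxb : (Lrev m x) b.rev = x b := by rw [Lrev_apply, Fin.rev_rev]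
  have key := hval b.rev
  rw [hxb, ← hpd] at key
  rw [key]
  have hbv : (b.rev : ℕ) = 2*m - 1 - (b:ℕ) := by rw [Fin.val_rev]; omega
  have hbLt := b.isLt
  have hGx : Feven m k (Lrev m x) = Geven m k x := by rw [hG]
  have heps : eps ((b.rev : ℕ)) = -(eps (b:ℕ)) := by
    rw [hbv]
    rcases Nat.mod_two_eq_zero_or_one (b:ℕ) with h | h
    · have h2 : (2*m - 1 - (b:ℕ)) % 2 = 1 := by omega
      simp [eps, h, h2]
    · have h2 : (2*m - 1 - (b:ℕ)) % 2 = 0 := by omega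
      simp [eps, h, h2]
  have hc1 : ((b.rev:ℕ) < 2*k) ↔ (2*m - 2*k ≤ (b:ℕ)) := by rw [hbv]; omega
  have hc2 : (2*k ≤ (b.rev:ℕ)) ↔ ((b:ℕ) < 2*m - 2*k) := by rw [hbv]; omega
  have hLx : Lrev m x = fun c : Fin (2*m) => x c.rev := rfl
  rw [hGx, heps, hLx]
  rw [if_congr hc1 rfl rfl, if_congr hc2 rfl rfl]


end FGaux

/-- For `n = 2m` even and `1 ≤ i, j < m`:
`{F_i, G_j} = -F_i G_j` if `i + j < m + 1`, and `{F_i, G_j} = -F_{m-j} G_{m-i}`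
if `i + j ≥ m + 1`. -/
theorem Feven_Geven_brackets (m : ℕ) (i j : ℕ)
    (hi1 : 1 ≤ i) (him : i < m) (hj1 : 1 ≤ j) (hjm : j < m)
    (x : Fin (2*m) → ℝ) (hx : ∀ a, x a ≠ 0) :
    (i + j < m + 1 →
      pb lv (Feven m i) (Geven m j) x = -(Feven m i x * Geven m j x)) ∧
    (m + 1 ≤ i + j →
      pb lv (Feven m i) (Geven m j) x = -(Feven m (m-j) x * Geven m (m-i) x)) := by
  have hm : 1 ≤ m := by omega
  obtain ⟨hdF, hu⟩ := FGaux.pd_Feven m i hm him.le x hx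
  obtain ⟨hdG, hv⟩ := FGaux.pd_Geven m j hm hjm.le x hx
  set y : ℕ → ℝ := fun a => get x a with hy_def
  set Mi : ℝ := ∏ s ∈ Icc i (m-1), get x (2*s+1) / get x (2*s) with hMi_def
  set Nj : ℝ := ∏ s ∈ Icc j (m-1),
      get (fun c : Fin (2*m) => x c.rev) (2*s+1) / get (fun c : Fin (2*m) => x c.rev) (2*s)
    with hNj_def
  set Fi : ℝ := Feven m i x with hFi0
  set Gj : ℝ := Geven m j x with hGj0
  set uu : ℕ → ℝ := fun a =>
    (if a < 2*i then y a * Mi else 0) + (if 2*i ≤ a then FGaux.eps a * Fi else 0) with huu_def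
  set vv : ℕ → ℝ := fun b =>
    (if 2*m - 2*j ≤ b then y b * Nj else 0)
      + (if b < 2*m - 2*j then -(FGaux.eps b) * Gj else 0) with hvv_def
  have hyx : ∀ a : Fin (2*m), y (a:ℕ) = x a := by
    intro a
    rw [hy_def]
    simp [_root_.get, a.isLt, Fin.eta]
  -- Step A : pb as a double range sum
  have hterm : ∀ a b : Fin (2*m),
      lv a b x * pd a (Feven m i) x * pd b (Geven m j) x
        = FGaux.sg (a:ℕ) (b:ℕ) * uu (a:ℕ) * vv (b:ℕ) := by
    intro a b
    have hua : uu (a:ℕ) = x a * pd a (Feven m i) x := by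
      rw [huu_def]
      simp only [hyx a]
      exact (hu a).symm
    have hvb : vv (b:ℕ) = x b * pd b (Geven m j) x := by
      rw [hvv_def]
      simp only [hyx b]
      exact (hv b).symm
    rw [hua, hvb, lv, FGaux.sg]
    rcases lt_trichotomy ((a:ℕ)) ((b:ℕ)) with h | h | h
    · rw [if_pos h, if_pos h]; ring
    · have h1 : ¬((a:ℕ) < (b:ℕ)) := by omega
      have h2 : ¬((b:ℕ) < (a:ℕ)) := by omega
      rw [if_neg h1, if_neg h1, if_neg h2, if_neg h2]; ring
    · have h1 : ¬((a:ℕ) < (b:ℕ)) := by omega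
      rw [if_neg h1, if_neg h1, if_pos h, if_pos h]; ring
  have hpb : pb lv (Feven m i) (Geven m j) x
      = ∑ a ∈ range (2*m), ∑ b ∈ range (2*m), FGaux.sg a b * uu a * vv b := by
    rw [pb]
    rw [Finset.sum_congr rfl (fun a _ => Finset.sum_congr rfl (fun b _ => hterm a b))]
    rw [Fin.sum_univ_eq_sum_range (fun aN => ∑ b : Fin (2*m), FGaux.sg aN (b:ℕ) * uu aN * vv (b:ℕ))]
    exact Finset.sum_congr rfl fun a _ =>
      Fin.sum_univ_eq_sum_range (fun bN => FGaux.sg a bN * uu a * vv bN) (2*m)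
  rw [FGaux.double_reduce] at hpb
  -- closed form for prefix sums of uu
  have hW : ∀ b : ℕ, ∑ a ∈ range b, uu a
      = Mi * (∑ ℓ ∈ range (min b (2*i)), y ℓ)
        + Fi * ((∑ a ∈ range b, FGaux.eps a) - (∑ a ∈ range (min b (2*i)), FGaux.eps a)) := by
    intro b
    induction b with
    | zero => simp
    | succ c ih =>
      rw [Finset.sum_range_succ, ih]
      by_cases hc : c < 2*i
      · have h1 : min c (2*i) = c := by omega
        have h2 : min (c+1) (2*i) = c+1 := by omega
        rw [h1, h2, huu_def]
        simp only []
        rw [if_pos hc, if_neg (by omega), Finset.sum_range_succ (f := y),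
          Finset.sum_range_succ (f := FGaux.eps)]
        ring
      · have h1 : min c (2*i) = 2*i := by omega
        have h2 : min (c+1) (2*i) = 2*i := by omega
        rw [h1, h2, huu_def]
        simp only []
        rw [if_neg hc, if_pos (by omega), Finset.sum_range_succ (f := FGaux.eps)]
        ring
  have hFiSp : Fi = (∑ ℓ ∈ range (2*i), y ℓ) * Mi := rfl
  have hU : ∑ a ∈ range (2*m), uu a = Fi := by
    rw [hW (2*m), min_eq_right (by omega), FGaux.sum_eps, FGaux.sum_eps,
      if_neg (by omega), if_neg (by omega), hFiSp]
    ring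
  have hw : ∀ b : ℕ,
      2 * (∑ a ∈ range b, uu a) + uu b - (∑ a ∈ range (2*m), uu a)
        = if b < 2*i then Mi * (2 * (∑ ℓ ∈ range b, y ℓ) + y b) - Fi else 0 := by
    intro b
    rw [hU, hW b]
    by_cases hb : b < 2*i
    · rw [min_eq_left (by omega), if_pos hb, huu_def]
      simp only []
      rw [if_pos hb, if_neg (by omega)]
      ring
    · rw [min_eq_right (by omega), if_neg hb, huu_def]
      simp only []
      rw [if_neg hb, if_pos (by omega), FGaux.sum_eps b, FGaux.sum_eps (2*i),
        if_neg (show ¬((2*i) % 2 = 1) by omega)]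
      rcases Nat.mod_two_eq_zero_or_one b with h | h
      · rw [if_neg (show ¬(b % 2 = 1) by omega)]
        simp only [FGaux.eps, if_neg (show ¬(b % 2 = 1) by omega)]
        rw [hFiSp]; ring
      · rw [if_pos h]
        simp only [FGaux.eps, if_pos h]
        rw [hFiSp]; ring
  -- single sum over range (2*i)
  have hpb2 : pb lv (Feven m i) (Geven m j) x
      = ∑ b ∈ range (2*i), (Mi * (2 * (∑ ℓ ∈ range b, y ℓ) + y b) - Fi) * vv b := by
    rw [hpb]
    rw [Finset.sum_congr rfl (fun b _ => by rw [hw b])]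
    rw [← Finset.sum_subset (Finset.range_subset_range.mpr (by omega : 2*i ≤ 2*m))
      (fun b _ hb => by rw [if_neg (by rw [Finset.mem_range] at hb; omega : ¬ b < 2*i), zero_mul])]
    exact Finset.sum_congr rfl fun b hb => by
      rw [Finset.mem_range] at hb
      rw [if_pos hb]
  -- reversal helpers
  have hgetrev : ∀ ℓ, ℓ < 2*m → get (fun c : Fin (2*m) => x c.rev) ℓ = y (2*m - 1 - ℓ) := by
    intro ℓ h
    have h2 : 2*m - 1 - ℓ < 2*m := by omega
    rw [hy_def]
    simp only [_root_.get, dif_pos h, dif_pos h2]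
    congr 1
    refine Fin.ext ?_
    rw [Fin.val_rev]
    show 2*m - (ℓ+1) = 2*m-1-ℓ
    omega
  have hy0 : ∀ c, c < 2*m → y c ≠ 0 := by
    intro c hc
    rw [hy_def]
    simp only [_root_.get, dif_pos hc]
    exact hx _
  have hTrefl : ∀ p, p ≤ m → ∑ ℓ ∈ range (2*p), get (fun c : Fin (2*m) => x c.rev) ℓ
      = ∑ b ∈ Ico (2*m - 2*p) (2*m), y b := by
    intro p hp
    rw [Finset.sum_congr rfl (fun ℓ hl => hgetrev ℓ (by rw [Finset.mem_range] at hl; omega))]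
    rw [Finset.range_eq_Ico, Finset.sum_Ico_reflect y 0 (by omega : 2*p ≤ (2*m-1) + 1)]
    rw [show 2*m-1+1-2*p = 2*m-2*p from by omega, show 2*m-1+1-0 = 2*m from by omega]
  constructor
  · -- case i + j ≤ m
    intro hij
    rw [hpb2]
    have hpt : ∀ b ∈ range (2*i), (Mi * (2 * (∑ ℓ ∈ range b, y ℓ) + y b) - Fi) * vv b
        = -(Gj*Mi) * (FGaux.eps b * (2 * (∑ ℓ ∈ range b, y ℓ) + y b)) + (Gj*Fi) * FGaux.eps b := by
      intro b hb
      rw [Finset.mem_range] at hb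
      have hvvb : vv b = -(FGaux.eps b) * Gj := by
        rw [hvv_def]
        simp only []
        rw [if_neg (by omega), if_pos (by omega)]
        ring
      rw [hvvb]; ring
    rw [Finset.sum_congr rfl hpt, Finset.sum_add_distrib, ← Finset.mul_sum, ← Finset.mul_sum,
      FGaux.sum_alt y i, FGaux.sum_eps (2*i), if_neg (show ¬((2*i) % 2 = 1) by omega), hFiSp]
    ring
  · -- case m + 1 ≤ i + j
    intro hij
    have hPQ : 2*m - 2*j ≤ 2*i := by omega
    -- the product identity
    have hIcc : ∀ a : ℕ, Icc a (m-1) = Ico a m := by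
      intro a; ext s; simp only [Finset.mem_Icc, Finset.mem_Ico]; omega
    have hf2g : ∀ s, s < m →
        get (fun c : Fin (2*m) => x c.rev) (2*s+1) / get (fun c : Fin (2*m) => x c.rev) (2*s)
          = y (2*(m-1-s)) / y (2*(m-1-s)+1) := by
      intro s hs
      rw [hgetrev _ (by omega), hgetrev _ (by omega),
        show 2*m-1-(2*s+1) = 2*(m-1-s) by omega, show 2*m-1-(2*s) = 2*(m-1-s)+1 by omega]
    have hA : ∏ s ∈ Ico (m-j) i, get x (2*s+1) / get x (2*s)
        = ∏ u ∈ range (i-(m-j)), y (2*((m-j)+u)+1) / y (2*((m-j)+u)) := by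
      rw [Finset.prod_Ico_eq_prod_range]
    have hB : ∏ s ∈ Ico (m-i) j,
          get (fun c : Fin (2*m) => x c.rev) (2*s+1) / get (fun c : Fin (2*m) => x c.rev) (2*s)
        = ∏ u ∈ range (i-(m-j)), y (2*((m-j)+u)) / y (2*((m-j)+u)+1) := by
      rw [Finset.prod_Ico_eq_prod_range, show j - (m-i) = i-(m-j) by omega]
      rw [← Finset.prod_range_reflect (fun u =>
        get (fun c : Fin (2*m) => x c.rev) (2*((m-i)+u)+1)
          / get (fun c : Fin (2*m) => x c.rev) (2*((m-i)+u))) (i-(m-j))]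
      refine Finset.prod_congr rfl fun u hu => ?_
      rw [Finset.mem_range] at hu
      rw [hf2g ((m-i) + (i-(m-j)-1-u)) (by omega),
        show m-1-((m-i) + (i-(m-j)-1-u)) = (m-j)+u by omega]
    have hAB : (∏ s ∈ Ico (m-j) i, get x (2*s+1) / get x (2*s)) *
        (∏ s ∈ Ico (m-i) j,
          get (fun c : Fin (2*m) => x c.rev) (2*s+1) / get (fun c : Fin (2*m) => x c.rev) (2*s)) = 1 := by
      rw [hA, hB, ← Finset.prod_mul_distrib]
      refine Finset.prod_eq_one fun u hu => ?_
      rw [Finset.mem_range] at hu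
      have hlt : 2*((m-j)+u)+1 < 2*m := by omega
      have h1 : y (2*((m-j)+u)+1) ≠ 0 := hy0 _ hlt
      have h2 : y (2*((m-j)+u)) ≠ 0 := hy0 _ (by omega)
      field_simp
    have hMN : Mi * Nj = (∏ s ∈ Icc (m-j) (m-1), get x (2*s+1) / get x (2*s)) *
        (∏ s ∈ Icc (m-i) (m-1),
          get (fun c : Fin (2*m) => x c.rev) (2*s+1) / get (fun c : Fin (2*m) => x c.rev) (2*s)) := by
      rw [hMi_def, hNj_def, hIcc, hIcc, hIcc, hIcc]
      rw [← Finset.prod_Ico_consecutive (fun s => get x (2*s+1) / get x (2*s))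
        (show m-j ≤ i by omega) (show i ≤ m by omega)]
      rw [← Finset.prod_Ico_consecutive (fun s =>
          get (fun c : Fin (2*m) => x c.rev) (2*s+1) / get (fun c : Fin (2*m) => x c.rev) (2*s))
        (show m-i ≤ j by omega) (show j ≤ m by omega)]
      linear_combination (-(∏ s ∈ Ico i m, get x (2*s+1) / get x (2*s))) *
        (∏ s ∈ Ico j m,
          get (fun c : Fin (2*m) => x c.rev) (2*s+1) / get (fun c : Fin (2*m) => x c.rev) (2*s)) * hAB
    -- split the sum
    rw [hpb2, ← Finset.sum_range_add_sum_Ico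
      (fun b => (Mi * (2 * (∑ ℓ ∈ range b, y ℓ) + y b) - Fi) * vv b) hPQ]
    have hchunk1 : ∑ b ∈ range (2*m - 2*j), (Mi * (2 * (∑ ℓ ∈ range b, y ℓ) + y b) - Fi) * vv b
        = -(Gj*Mi) * (∑ ℓ ∈ range (2*m - 2*j), y ℓ) + (Gj*Fi) * 0 := by
      have hpt : ∀ b ∈ range (2*m - 2*j), (Mi * (2 * (∑ ℓ ∈ range b, y ℓ) + y b) - Fi) * vv b
          = -(Gj*Mi) * (FGaux.eps b * (2 * (∑ ℓ ∈ range b, y ℓ) + y b)) + (Gj*Fi) * FGaux.eps b := by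
        intro b hb
        rw [Finset.mem_range] at hb
        have hvvb : vv b = -(FGaux.eps b) * Gj := by
          rw [hvv_def]
          simp only []
          rw [if_neg (by omega), if_pos (by omega)]
          ring
        rw [hvvb]; ring
      rw [Finset.sum_congr rfl hpt, Finset.sum_add_distrib, ← Finset.mul_sum, ← Finset.mul_sum]
      rw [show 2*m - 2*j = 2*(m-j) by omega]
      rw [FGaux.sum_alt y (m-j), FGaux.sum_eps (2*(m-j)),
        if_neg (show ¬((2*(m-j)) % 2 = 1) by omega)]
    have hchunk2 : ∑ b ∈ Ico (2*m - 2*j) (2*i), (Mi * (2 * (∑ ℓ ∈ range b, y ℓ) + y b) - Fi) * vv b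
        = (Mi*Nj) * ((∑ ℓ ∈ range (2*i), y ℓ)^2 - (∑ ℓ ∈ range (2*m - 2*j), y ℓ)^2)
          - (Fi*Nj) * ((∑ ℓ ∈ range (2*i), y ℓ) - (∑ ℓ ∈ range (2*m - 2*j), y ℓ)) := by
      have hpt : ∀ b ∈ Ico (2*m - 2*j) (2*i), (Mi * (2 * (∑ ℓ ∈ range b, y ℓ) + y b) - Fi) * vv b
          = (Mi*Nj) * (y b * (2 * (∑ ℓ ∈ range b, y ℓ) + y b)) - (Fi*Nj) * y b := by
        intro b hb
        rw [Finset.mem_Ico] at hb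
        have hvvb : vv b = y b * Nj := by
          rw [hvv_def]
          simp only []
          rw [if_pos hb.1, if_neg (by omega)]
          ring
        rw [hvvb]; ring
      rw [Finset.sum_congr rfl hpt, Finset.sum_sub_distrib, ← Finset.mul_sum, ← Finset.mul_sum]
      rw [Finset.sum_Ico_eq_sub (fun b => y b * (2 * (∑ ℓ ∈ range b, y ℓ) + y b)) hPQ,
        Finset.sum_Ico_eq_sub y hPQ]
      rw [FGaux.sum_telesq y (2*i), FGaux.sum_telesq y (2*m - 2*j)]
    rw [hchunk1, hchunk2]
    -- final algebra
    have hGjT : Gj = (∑ b ∈ Ico (2*m - 2*j) (2*m), y b) * Nj := by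
      have h0 : Gj = (∑ ℓ ∈ range (2*j), get (fun c : Fin (2*m) => x c.rev) ℓ) * Nj := rfl
      rw [h0, hTrefl j hjm.le]
    have hFmj : Feven m (m-j) x = (∑ ℓ ∈ range (2*(m-j)), y ℓ)
        * (∏ s ∈ Icc (m-j) (m-1), get x (2*s+1) / get x (2*s)) := rfl
    have hGmi : Geven m (m-i) x = (∑ ℓ ∈ range (2*(m-i)), get (fun c : Fin (2*m) => x c.rev) ℓ)
        * (∏ s ∈ Icc (m-i) (m-1),
            get (fun c : Fin (2*m) => x c.rev) (2*s+1) / get (fun c : Fin (2*m) => x c.rev) (2*s)) := rfl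
    rw [hFmj, hGmi, hTrefl (m-i) (by omega), show 2*m - 2*(m-i) = 2*i by omega]
    have hTj : ∑ b ∈ Ico (2*m - 2*j) (2*m), y b
        = ((∑ ℓ ∈ range (2*i), y ℓ) - (∑ ℓ ∈ range (2*m - 2*j), y ℓ))
          + ∑ b ∈ Ico (2*i) (2*m), y b := by
      rw [← Finset.sum_Ico_consecutive y hPQ (by omega : 2*i ≤ 2*m), Finset.sum_Ico_eq_sub y hPQ]
    rw [hGjT, hTj, hFiSp, show 2*m - 2*j = 2*(m-j) by omega]
    linear_combination (-((∑ ℓ ∈ range (2*(m-j)), y ℓ) * (∑ b ∈ Ico (2*i) (2*m), y b))) * hMN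
end
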